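/- arXiv:math/0010060 — 4 statements merged into one kernel-verified Lean document; each statement's English description precedes it below -/
import Mathlib

section
/- For the super-permutation matrix σ and structure constants C of a Lie superalgebra, the Z₂-homogeneity condition C^i_{jk} = 0 whenever (i) ≠ (j)+(k) (mod 2) is equivalent to the relation C^k_{ni} σ^{pm}_{kq} = σ^{sj}_{iq} σ^{pk}_{ns} C^m_{kj}. -/
open scoped BigOperators

private lemma sign_split' (a b : ZMod 2) :
    ((-1:ℂ))^((a+b).val) = (-1)^a.val * (-1)^b.val := by
  fin_cases a <;> fin_cases b <;>
    norm_num [ZMod.val_one, show ZMod.val (2:ZMod 2) = 0 by decide, ZMod.val] <;>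
    first | exact pow_zero _ | exact pow_one _

private lemma sign_ne' (a b : ZMod 2) (h : a ≠ b) (x : ℂ)
    (hx : (-1:ℂ)^a.val * x = (-1:ℂ)^b.val * x) : x = 0 := by
  fin_cases a <;> fin_cases b <;>
    first
    | exact absurd rfl h
    | (norm_num [ZMod.val_one, ZMod.val] at hx ⊢; linear_combination -hx/2)
    | (norm_num [ZMod.val_one, ZMod.val] at hx ⊢; linear_combination hx/2)

/-- For the super-permutation matrix `σ^{mk}_{ij} = (-1)^{(m)(k)} δ^m_j δ^k_i`
and an arbitrary tensor `C^k_{ij}`, the Z₂-homogeneity condition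
(`C^i_{jk} = 0` whenever `(i) ≠ (j) + (k)` mod 2) is equivalent to the relation
`C^k_{ni} σ^{pm}_{kq} = σ^{sj}_{iq} σ^{pk}_{ns} C^m_{kj}` (summation over repeated indices). -/
theorem homogeneity_iff_sigma_relation (N : ℕ) (par : Fin N → ZMod 2)
    (C : Fin N → Fin N → Fin N → ℂ)
    (σ : Fin N → Fin N → Fin N → Fin N → ℂ)
    (hσ : ∀ m k i j, σ m k i j =
      (-1 : ℂ) ^ (par m * par k).val * (if m = j then 1 else 0) * (if k = i then 1 else 0)) :
    (∀ i j k, par i ≠ par j + par k → C i j k = 0) ↔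
      (∀ n i p q m,
        ∑ k, C k n i * σ p m k q =
          ∑ s, ∑ j, ∑ k, σ s j i q * σ p k n s * C m k j) := by
  have L : ∀ n i p q m, ∑ k, C k n i * σ p m k q =
      (if p = q then ((-1:ℂ))^(par p * par m).val * C m n i else 0) := by
    intro n i p q m
    simp [hσ, mul_ite, ite_mul, Finset.sum_ite_eq, mul_comm]
  have R : ∀ n i p q m, ∑ s, ∑ j, ∑ k, σ s j i q * σ p k n s * C m k j
      = (if p = q then
          ((-1:ℂ))^(par q * par i).val * ((-1:ℂ))^(par p * par n).val * C m n i else 0) := by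
    intro n i p q m
    simp [hσ, mul_ite, ite_mul, Finset.sum_ite_eq, Finset.sum_ite_eq', mul_comm, mul_assoc,
      mul_left_comm]
  constructor
  · intro hC n i p q m
    rw [L, R]
    by_cases hpq : p = q
    · subst hpq
      simp only [if_pos rfl]
      by_cases hm : par m = par n + par i
      · rw [hm, mul_add, sign_split']
        ring_nf
      · rw [hC m n i hm]
        ring_nf
    · simp [hpq]
  · intro hrel a b c h
    -- find p with par p = 1
    have h01 : ∀ x : ZMod 2, x = 0 ∨ x = 1 := by decide
    obtain ⟨p, hp⟩ : ∃ p, par p = 1 := by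
      rcases h01 (par a) with ha | ha
      · rcases h01 (par b) with hb | hb
        · rcases h01 (par c) with hc | hc
          · exact absurd (by rw [ha, hb, hc]; decide) h
          · exact ⟨c, hc⟩
        · exact ⟨b, hb⟩
      · exact ⟨a, ha⟩
    have key := hrel b c p p a
    rw [L, R] at key
    simp only [if_pos rfl] at key
    rw [hp] at key
    simp only [one_mul] at key
    refine sign_ne' (par a) (par b + par c) h _ ?_
    rw [sign_split']
    simp only [if_true] at key
    rw [key]
    ring
end

section
/- If σ satisfies the braid relation, then σ^{-1}_{r←1} A_{1→r−1} = A_{2→r} σ^{-1}_{r←1}, where σ^{-1}_{r←k} := σ^{-1}_{k,k+1} ⋯ σ^{-1}_{r−1,r}, A_{1→r−1} is the quantum antisymmetrizer on the first r−1 tensor factors, and A_{2→r} is the same antisymmetrizer shifted to act on factors 2 through r. -/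
open scoped BigOperators

variable {F : Type*} [Field F]

/-- The operator acting as `s` on tensor factors `i, i+1` (0-indexed) of `V^{⊗M}`, `V = F^N`,
realized as a matrix on the index set `Fin M → Fin N`. -/
def opAt (N M : ℕ) (s : Matrix (Fin N × Fin N) (Fin N × Fin N) F) (i : ℕ) :
    Matrix (Fin M → Fin N) (Fin M → Fin N) F :=
  if h : i + 1 < M then
    Matrix.of fun f g =>
      s (f ⟨i, by omega⟩, f ⟨i + 1, h⟩) (g ⟨i, by omega⟩, g ⟨i + 1, h⟩) *
        ∏ j : Fin M,
          (if (j : ℕ) = i ∨ (j : ℕ) = i + 1 then 1 else if f j = g j then 1 else 0)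
  else 1

/-- `σ_{k→n} = σ_{k,k+1} σ_{k+1,k+2} ⋯ σ_{n-1,n}` (1-indexed tensor positions as in the paper),
with all positions shifted by `off`. -/
def sigmaFwd (N M : ℕ) (s : Matrix (Fin N × Fin N) (Fin N × Fin N) F) (off k n : ℕ) :
    Matrix (Fin M → Fin N) (Fin M → Fin N) F :=
  ((List.range (n - k)).map fun t => opAt N M s (off + k - 1 + t)).prod

/-- `σ_{n←k} = σ_{n-1,n} ⋯ σ_{k+1,k+2} σ_{k,k+1}`, with all positions shifted by `off`. -/
def sigmaBwd (N M : ℕ) (s : Matrix (Fin N × Fin N) (Fin N × Fin N) F) (off n k : ℕ) :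
    Matrix (Fin M → Fin N) (Fin M → Fin N) F :=
  ((List.range (n - k)).map fun t => opAt N M s (off + n - 2 - t)).prod

/-- The quantum antisymmetrizer `A_{1→n}` (acting on tensor positions shifted by `off`),
defined by the recursion `A_{1→n} = (1 + Σ_{k=1}^{n-1} (-1)^{n-k} σ_{k→n}) A_{1→n-1}`. -/
def Aop (N M : ℕ) (s : Matrix (Fin N × Fin N) (Fin N × Fin N) F) (off : ℕ) :
    ℕ → Matrix (Fin M → Fin N) (Fin M → Fin N) F
  | 0 => 1
  | 1 => 1
  | n + 2 =>
      (1 + ∑ k ∈ Finset.Icc 1 (n + 1),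
          ((-1 : F) ^ (n + 2 - k)) • sigmaFwd N M s off k (n + 2)) *
        Aop N M s off (n + 1)

namespace QA

/-- Patch `f` on the interval `[i, i+K)` using `v`. -/
def patch {N M : ℕ} (i K : ℕ) (f : Fin M → Fin N) (v : Fin K → Fin N) : Fin M → Fin N :=
  fun j => if hj : i ≤ (j : ℕ) ∧ (j : ℕ) < i + K then v ⟨(j : ℕ) - i, by omega⟩ else f j

lemma patch_out {N M : ℕ} {i K : ℕ} (f : Fin M → Fin N) (v : Fin K → Fin N)
    {j : Fin M} (hj : ¬(i ≤ (j : ℕ) ∧ (j : ℕ) < i + K)) : patch i K f v j = f j := by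
  simp [patch, hj]

lemma patch_mk {N M : ℕ} {i K : ℕ} (f : Fin M → Fin N) (v : Fin K → Fin N)
    (a : ℕ) (ha : a < M) (h1 : i ≤ a) (h2 : a < i + K) :
    patch i K f v ⟨a, ha⟩ = v ⟨a - i, by omega⟩ := by
  simp only [patch]
  rw [dif_pos ⟨h1, h2⟩]

lemma app_congr {N M : ℕ} (f : Fin M → Fin N) {a b : ℕ} (ha : a < M) (hb : b < M)
    (hab : a = b) : f ⟨a, ha⟩ = f ⟨b, hb⟩ := by subst hab; rfl

lemma sum_collapse {N M i K : ℕ} (h : i + K ≤ M) (f : Fin M → Fin N)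
    (T : (Fin M → Fin N) → ℂ)
    (hT : ∀ u : Fin M → Fin N, ∀ j : Fin M,
      ¬(i ≤ (j : ℕ) ∧ (j : ℕ) < i + K) → u j ≠ f j → T u = 0) :
    ∑ u, T u = ∑ v : Fin K → Fin N, T (patch i K f v) := by
  classical
  have hMK : ∀ (t : Fin K), i + (t : ℕ) < M := fun t => by omega
  rw [← Finset.sum_filter_of_ne
    (p := fun u : Fin M → Fin N => ∀ j : Fin M, ¬(i ≤ (j : ℕ) ∧ (j : ℕ) < i + K) → u j = f j)
    (fun u _ hu => by
      intro j hj1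
      by_contra hj2
      exact hu (hT u j hj1 hj2))]
  have key : ∀ u : Fin M → Fin N, (∀ j : Fin M, ¬(i ≤ (j : ℕ) ∧ (j : ℕ) < i + K) → u j = f j) →
      patch i K f (fun t : Fin K => u ⟨i + (t : ℕ), hMK t⟩) = u := by
    intro u hu
    funext j
    by_cases hj : i ≤ (j : ℕ) ∧ (j : ℕ) < i + K
    · rcases j with ⟨jv, hjv⟩
      rw [patch_mk f _ jv hjv hj.1 hj.2]
      congr 1
      apply Fin.ext
      simp only [Fin.val_mk] at hj ⊢
      omega
    · rw [patch_out f _ hj, hu j hj]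
  refine Finset.sum_bij' (fun u _ => fun t : Fin K => u ⟨i + (t : ℕ), hMK t⟩)
    (fun v _ => patch i K f v) ?_ ?_ ?_ ?_ ?_
  · intro a ha; exact Finset.mem_univ _
  · intro v hv
    simp only [Finset.mem_filter, Finset.mem_univ, true_and]
    intro j hj; exact patch_out f v hj
  · intro u hu
    simp only [Finset.mem_filter, Finset.mem_univ, true_and] at hu
    exact key u hu
  · intro v hv
    funext t
    rw [patch_mk f v (i + (t : ℕ)) (hMK t) (by omega) (by omega)]
    congr 1
    apply Fin.ext
    simp only [Fin.val_mk]
    omega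
  · intro u hu
    simp only [Finset.mem_filter, Finset.mem_univ, true_and] at hu
    rw [key u hu]

/-- Product of an "almost everywhere 1" function with one special point. -/
lemma prod_single {M : ℕ} (d : Fin M → ℂ) (j0 : Fin M)
    (hd : ∀ j, j ≠ j0 → d j = 1) : ∏ j, d j = d j0 :=
  Finset.prod_eq_single j0 (fun b _ hb => hd b hb) (fun h => absurd (Finset.mem_univ j0) h)

lemma prod_pair {M : ℕ} (d : Fin M → ℂ) (j0 j1 : Fin M) (hne : j0 ≠ j1)
    (hd : ∀ j, j ≠ j0 → j ≠ j1 → d j = 1) : ∏ j, d j = d j0 * d j1 := by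
  classical
  rw [← Finset.mul_prod_erase Finset.univ d (Finset.mem_univ j0),
    ← Finset.mul_prod_erase _ d
      (Finset.mem_erase.mpr ⟨hne.symm, Finset.mem_univ j1⟩),
    Finset.prod_eq_one, mul_one]
  intro j hj
  simp only [Finset.mem_erase] at hj
  exact hd j hj.2.1 hj.1


lemma patch_eval {N M : ℕ} {i K : ℕ} (f : Fin M → Fin N) (v : Fin K → Fin N)
    (t : ℕ) (ht : t < K) (hM : i + t < M) :
    patch i K f v ⟨i + t, hM⟩ = v ⟨t, ht⟩ := by
  rw [patch_mk f v (i + t) hM (by omega) (by omega)]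
  congr 1
  apply Fin.ext
  simp

lemma patch_eval0 {N M : ℕ} {i : ℕ} (f : Fin M → Fin N) (v : Fin 2 → Fin N)
    (h : i < M) : patch i 2 f v ⟨i, h⟩ = v 0 := by
  rw [app_congr (patch i 2 f v) (by omega) (by omega) (show i = i + 0 by omega),
    patch_eval f v 0 (by omega) (by omega)]
  exact congrArg v (Fin.ext (by simp))

lemma patch_eval1 {N M : ℕ} {i : ℕ} (f : Fin M → Fin N) (v : Fin 2 → Fin N)
    (h : i + 1 < M) : patch i 2 f v ⟨i + 1, h⟩ = v 1 := by
  rw [patch_eval f v 1 (by omega) h]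
  exact congrArg v (Fin.ext (by simp))

/-- `opAt a i` applied with second argument patched from the first on `[i, i+2)`. -/
lemma opAt_apply_patch_right {N M : ℕ} (a : Matrix (Fin N × Fin N) (Fin N × Fin N) ℂ)
    {i : ℕ} (h : i + 1 < M) (f : Fin M → Fin N) (v : Fin 2 → Fin N) :
    opAt N M a i f (patch i 2 f v) =
      a (f ⟨i, by omega⟩, f ⟨i + 1, h⟩) (v 0, v 1) := by
  simp only [opAt, dif_pos h, Matrix.of_apply]
  rw [Finset.prod_eq_one, mul_one]
  · rw [patch_eval0 f v (by omega), patch_eval1 f v h]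
  · intro j _
    by_cases hc : (j : ℕ) = i ∨ (j : ℕ) = i + 1
    · rw [if_pos hc]
    · rw [if_neg hc, patch_out f v (by omega), if_pos rfl]

lemma opAt_zero_of_ne {N M : ℕ} (a : Matrix (Fin N × Fin N) (Fin N × Fin N) ℂ)
    {i : ℕ} (h : i + 1 < M) (f u : Fin M → Fin N) (j : Fin M)
    (hj : ¬((j : ℕ) = i ∨ (j : ℕ) = i + 1)) (hne : f j ≠ u j) :
    opAt N M a i f u = 0 := by
  simp only [opAt, dif_pos h, Matrix.of_apply]
  apply mul_eq_zero_of_right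
  exact Finset.prod_eq_zero (Finset.mem_univ j) (by rw [if_neg hj, if_neg hne])

lemma opAt_mul {N M : ℕ} (a b : Matrix (Fin N × Fin N) (Fin N × Fin N) ℂ) (i : ℕ) :
    opAt N M (a * b) i = opAt N M a i * opAt N M b i := by
  by_cases h : i + 1 < M
  · have h2 : i + 2 ≤ M := by omega
    ext f g
    rw [Matrix.mul_apply]
    rw [sum_collapse h2 f (fun u => opAt N M a i f u * opAt N M b i u g)
      (fun u j hj hne => mul_eq_zero_of_left
        (opAt_zero_of_ne a h f u j (by omega) (Ne.symm hne)) _)]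
    have e2 : ∀ v : Fin 2 → Fin N, opAt N M b i (patch i 2 f v) g =
        b (v 0, v 1) (g ⟨i, by omega⟩, g ⟨i + 1, h⟩) *
          ∏ j : Fin M, (if (j : ℕ) = i ∨ (j : ℕ) = i + 1 then 1
            else if f j = g j then 1 else 0) := by
      intro v
      simp only [opAt, dif_pos h, Matrix.of_apply]
      congr 1
      · rw [patch_eval0 f v (by omega), patch_eval1 f v h]
      · refine Finset.prod_congr rfl fun j _ => ?_
        by_cases hc : (j : ℕ) = i ∨ (j : ℕ) = i + 1
        · rw [if_pos hc, if_pos hc]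
        · rw [if_neg hc, if_neg hc, patch_out f v (by omega)]
    simp only [opAt_apply_patch_right a h f, e2]
    simp only [opAt, dif_pos h, Matrix.of_apply]
    rw [Matrix.mul_apply, Finset.sum_mul]
    exact (Fintype.sum_equiv (piFinTwoEquiv fun _ => Fin N) _ _
      (fun v => by simp [mul_assoc])).symm
  · simp only [opAt, dif_neg h, one_mul]


lemma opAt_one {N M : ℕ} (i : ℕ) :
    opAt N M (1 : Matrix (Fin N × Fin N) (Fin N × Fin N) ℂ) i = 1 := by
  by_cases h : i + 1 < M
  · ext f g
    simp only [opAt, dif_pos h, Matrix.of_apply]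
    by_cases hfg : f = g
    · subst hfg
      rw [Matrix.one_apply_eq, Matrix.one_apply_eq, Finset.prod_eq_one, mul_one]
      intro k _
      by_cases hc : (k : ℕ) = i ∨ (k : ℕ) = i + 1
      · rw [if_pos hc]
      · rw [if_neg hc, if_pos rfl]
    · obtain ⟨k, hk⟩ := Function.ne_iff.mp hfg
      rw [Matrix.one_apply_ne hfg]
      by_cases hc : (k : ℕ) = i ∨ (k : ℕ) = i + 1
      · have hpair : (f ⟨i, by omega⟩, f ⟨i + 1, h⟩) ≠ (g ⟨i, by omega⟩, g ⟨i + 1, h⟩) := by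
          intro heq
          apply hk
          rcases hc with hc | hc
          · have hk' : k = ⟨i, by omega⟩ := Fin.ext hc
            rw [hk']
            exact congrArg Prod.fst heq
          · have hk' : k = ⟨i + 1, h⟩ := Fin.ext hc
            rw [hk']
            exact congrArg Prod.snd heq
        rw [Matrix.one_apply_ne hpair, zero_mul]
      · apply mul_eq_zero_of_right
        exact Finset.prod_eq_zero (Finset.mem_univ k) (by rw [if_neg hc, if_neg hk])
  · simp only [opAt, dif_neg h]

lemma sum_two_delta {N : ℕ} (F : Fin N × Fin N → ℂ) (x0 y0 : Fin N) :
    ∑ v : Fin 2 → Fin N, F (v 0, v 1) *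
      ((if v 0 = x0 then (1 : ℂ) else 0) * (if v 1 = y0 then (1 : ℂ) else 0)) = F (x0, y0) := by
  have h := Fintype.sum_equiv (piFinTwoEquiv fun _ => Fin N)
    (fun v : Fin 2 → Fin N => F (v 0, v 1) *
      ((if v 0 = x0 then (1 : ℂ) else 0) * (if v 1 = y0 then (1 : ℂ) else 0)))
    (fun z : Fin N × Fin N => F z *
      ((if z.1 = x0 then (1 : ℂ) else 0) * (if z.2 = y0 then (1 : ℂ) else 0)))
    (fun v => rfl)
  rw [h, Fintype.sum_prod_type]
  simp [mul_ite, ite_mul, Finset.sum_ite_eq']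

lemma opAt_mul_apply_disjoint {N M : ℕ} (a b : Matrix (Fin N × Fin N) (Fin N × Fin N) ℂ)
    {i j : ℕ} (hd : i + 2 ≤ j ∨ j + 2 ≤ i) (hi : i + 1 < M) (hj : j + 1 < M)
    (f g : Fin M → Fin N) :
    (opAt N M a i * opAt N M b j) f g =
      a (f ⟨i, by omega⟩, f ⟨i + 1, hi⟩) (g ⟨i, by omega⟩, g ⟨i + 1, hi⟩) *
      b (f ⟨j, by omega⟩, f ⟨j + 1, hj⟩) (g ⟨j, by omega⟩, g ⟨j + 1, hj⟩) *
      ∏ k : Fin M, (if (k : ℕ) = i ∨ (k : ℕ) = i + 1 ∨ (k : ℕ) = j ∨ (k : ℕ) = j + 1 then 1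
        else if f k = g k then 1 else 0) := by
  rw [Matrix.mul_apply]
  rw [sum_collapse (show i + 2 ≤ M by omega) f _
    (fun u k hk hne => mul_eq_zero_of_left
      (opAt_zero_of_ne a hi f u k (by omega) (Ne.symm hne)) _)]
  have hstep : ∀ v : Fin 2 → Fin N,
      opAt N M a i f (patch i 2 f v) * opAt N M b j (patch i 2 f v) g =
        (a (f ⟨i, by omega⟩, f ⟨i + 1, hi⟩) (v 0, v 1) *
          (b (f ⟨j, by omega⟩, f ⟨j + 1, hj⟩) (g ⟨j, by omega⟩, g ⟨j + 1, hj⟩) *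
            ∏ k : Fin M, (if (k : ℕ) = i ∨ (k : ℕ) = i + 1 ∨ (k : ℕ) = j ∨ (k : ℕ) = j + 1
              then 1 else if f k = g k then 1 else 0))) *
          ((if v 0 = g ⟨i, by omega⟩ then (1 : ℂ) else 0) *
           (if v 1 = g ⟨i + 1, hi⟩ then (1 : ℂ) else 0)) := by
    intro v
    rw [opAt_apply_patch_right a hi f v]
    have hb : opAt N M b j (patch i 2 f v) g =
        b (f ⟨j, by omega⟩, f ⟨j + 1, hj⟩) (g ⟨j, by omega⟩, g ⟨j + 1, hj⟩) *
          (((if v 0 = g ⟨i, by omega⟩ then (1 : ℂ) else 0) *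
            (if v 1 = g ⟨i + 1, hi⟩ then (1 : ℂ) else 0)) *
           ∏ k : Fin M, (if (k : ℕ) = i ∨ (k : ℕ) = i + 1 ∨ (k : ℕ) = j ∨ (k : ℕ) = j + 1
              then 1 else if f k = g k then 1 else 0)) := by
      have d : Fin M → ℂ := fun k =>
        if (k : ℕ) = i then (if v 0 = g k then (1 : ℂ) else 0)
        else if (k : ℕ) = i + 1 then (if v 1 = g k then (1 : ℂ) else 0) else 1
      simp only [opAt, dif_pos hj, Matrix.of_apply]
      congr 1
      · rw [patch_out f v (by simp only [Fin.val_mk]; omega),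
          patch_out f v (by simp only [Fin.val_mk]; omega)]
      · have hpp : ((if v 0 = g ⟨i, by omega⟩ then (1 : ℂ) else 0) *
            (if v 1 = g ⟨i + 1, hi⟩ then (1 : ℂ) else 0)) =
            ∏ k : Fin M, (if (k : ℕ) = i then (if v 0 = g k then (1 : ℂ) else 0)
              else if (k : ℕ) = i + 1 then (if v 1 = g k then (1 : ℂ) else 0) else 1) := by
          rw [prod_pair _ ⟨i, by omega⟩ ⟨i + 1, hi⟩ (by simp [Fin.ext_iff])
            (fun k hk0 hk1 => by
              have h0 : ¬((k : ℕ) = i) := fun hc => hk0 (Fin.ext hc)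
              have h1 : ¬((k : ℕ) = i + 1) := fun hc => hk1 (Fin.ext hc)
              rw [if_neg h0, if_neg h1])]
          have hne : ¬(((⟨i + 1, hi⟩ : Fin M) : ℕ) = i) := by
            simp only [Fin.val_mk]; omega
          rw [if_pos rfl, if_neg hne, if_pos rfl]
        rw [hpp, ← Finset.prod_mul_distrib]
        refine Finset.prod_congr rfl fun k _ => ?_
        by_cases h1 : (k : ℕ) = i
        · have hk : k = ⟨i, Nat.lt_of_succ_lt hi⟩ := Fin.ext h1
          subst hk
          rw [if_neg (show ¬(((⟨i, Nat.lt_of_succ_lt hi⟩ : Fin M) : ℕ) = j ∨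
              ((⟨i, Nat.lt_of_succ_lt hi⟩ : Fin M) : ℕ) = j + 1) from by
                simp only [Fin.val_mk]; omega),
            patch_eval0 f v (Nat.lt_of_succ_lt hi)]
          simp
        · by_cases h2 : (k : ℕ) = i + 1
          · have hk : k = ⟨i + 1, hi⟩ := Fin.ext h2
            subst hk
            rw [if_neg (show ¬(((⟨i + 1, hi⟩ : Fin M) : ℕ) = j ∨
                ((⟨i + 1, hi⟩ : Fin M) : ℕ) = j + 1) from by simp only [Fin.val_mk]; omega),
              patch_eval1 f v hi]
            have hne : ¬(i + 1 = i) := by omega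
            simp [hne]
          · by_cases h3 : (k : ℕ) = j ∨ (k : ℕ) = j + 1
            · rw [if_pos h3, if_neg h1, if_neg h2, if_pos (by tauto :
                (k : ℕ) = i ∨ (k : ℕ) = i + 1 ∨ (k : ℕ) = j ∨ (k : ℕ) = j + 1), one_mul]
            · rw [if_neg h3, if_neg h1, if_neg h2,
                patch_out f v (by omega), if_neg (by tauto :
                ¬((k : ℕ) = i ∨ (k : ℕ) = i + 1 ∨ (k : ℕ) = j ∨ (k : ℕ) = j + 1)), one_mul]
    rw [hb]
    ring
  rw [Finset.sum_congr rfl fun v _ => hstep v]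
  rw [sum_two_delta (fun z => (a (f ⟨i, by omega⟩, f ⟨i + 1, hi⟩) z *
    (b (f ⟨j, by omega⟩, f ⟨j + 1, hj⟩) (g ⟨j, by omega⟩, g ⟨j + 1, hj⟩) *
      ∏ k : Fin M, (if (k : ℕ) = i ∨ (k : ℕ) = i + 1 ∨ (k : ℕ) = j ∨ (k : ℕ) = j + 1
        then 1 else if f k = g k then 1 else 0))))]
  ring

lemma opAt_comm {N M : ℕ} (a b : Matrix (Fin N × Fin N) (Fin N × Fin N) ℂ)
    {i j : ℕ} (hij : i + 2 ≤ j) :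
    opAt N M a i * opAt N M b j = opAt N M b j * opAt N M a i := by
  by_cases hj : j + 1 < M
  · have hi : i + 1 < M := by omega
    ext f g
    rw [opAt_mul_apply_disjoint a b (Or.inl hij) hi hj f g,
      opAt_mul_apply_disjoint b a (Or.inr hij) hj hi f g]
    have hprod : ∏ k : Fin M, (if (k : ℕ) = i ∨ (k : ℕ) = i + 1 ∨ (k : ℕ) = j ∨ (k : ℕ) = j + 1
        then (1 : ℂ) else if f k = g k then 1 else 0) =
        ∏ k : Fin M, (if (k : ℕ) = j ∨ (k : ℕ) = j + 1 ∨ (k : ℕ) = i ∨ (k : ℕ) = i + 1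
        then (1 : ℂ) else if f k = g k then 1 else 0) :=
      Finset.prod_congr rfl fun k _ => if_congr (by tauto) rfl rfl
    rw [hprod]
    ring
  · rw [show opAt N M b j = 1 from by simp only [opAt, dif_neg hj], one_mul, mul_one]


/-- Embed a matrix on three tensor factors into positions `i, i+1, i+2` of `M` factors. -/
def emb3 {N M : ℕ} (i : ℕ) (h : i + 3 ≤ M) (A : Matrix (Fin 3 → Fin N) (Fin 3 → Fin N) ℂ) :
    Matrix (Fin M → Fin N) (Fin M → Fin N) ℂ :=
  Matrix.of fun f g =>
    A (fun t => f ⟨i + (t : ℕ), by omega⟩) (fun t => g ⟨i + (t : ℕ), by omega⟩) *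
      ∏ j : Fin M, (if i ≤ (j : ℕ) ∧ (j : ℕ) < i + 3 then 1 else if f j = g j then 1 else 0)

lemma emb3_mul {N M : ℕ} (i : ℕ) (h : i + 3 ≤ M)
    (A B : Matrix (Fin 3 → Fin N) (Fin 3 → Fin N) ℂ) :
    emb3 i h (A * B) = emb3 i h A * emb3 i h B := by
  ext f g
  show emb3 i h (A * B) f g = ∑ u, emb3 i h A f u * emb3 i h B u g
  rw [sum_collapse h f _ (fun u j hj hne => mul_eq_zero_of_left (by
    simp only [emb3, Matrix.of_apply]
    exact mul_eq_zero_of_right _ (Finset.prod_eq_zero (Finset.mem_univ j)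
      (by rw [if_neg hj, if_neg (Ne.symm hne)]))) _)]
  have e1 : ∀ v : Fin 3 → Fin N, emb3 i h A f (patch i 3 f v) =
      A (fun t => f ⟨i + (t : ℕ), by omega⟩) v := by
    intro v
    simp only [emb3, Matrix.of_apply]
    rw [Finset.prod_eq_one, mul_one]
    · congr 1
      funext t
      rw [patch_eval f v (t : ℕ) t.isLt (by omega)]
    · intro j _
      by_cases hc : i ≤ (j : ℕ) ∧ (j : ℕ) < i + 3
      · rw [if_pos hc]
      · rw [if_neg hc, patch_out f v hc, if_pos rfl]
  have e2 : ∀ v : Fin 3 → Fin N, emb3 i h B (patch i 3 f v) g =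
      B v (fun t => g ⟨i + (t : ℕ), by omega⟩) *
        ∏ j : Fin M, (if i ≤ (j : ℕ) ∧ (j : ℕ) < i + 3 then 1
          else if f j = g j then 1 else 0) := by
    intro v
    simp only [emb3, Matrix.of_apply]
    congr 1
    · congr 1
      funext t
      rw [patch_eval f v (t : ℕ) t.isLt (by omega)]
    · refine Finset.prod_congr rfl fun j _ => ?_
      by_cases hc : i ≤ (j : ℕ) ∧ (j : ℕ) < i + 3
      · rw [if_pos hc, if_pos hc]
      · rw [if_neg hc, if_neg hc, patch_out f v hc]
  simp only [e1, e2]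
  simp only [emb3, Matrix.of_apply, Matrix.mul_apply, Finset.sum_mul]
  exact Finset.sum_congr rfl fun v _ => by ring

lemma emb3_opAt0 {N M : ℕ} (i : ℕ) (h : i + 3 ≤ M)
    (s : Matrix (Fin N × Fin N) (Fin N × Fin N) ℂ) :
    emb3 i h (opAt N 3 s 0) = opAt N M s i := by
  have hi : i + 1 < M := by omega
  have hi2 : i + 2 < M := by omega
  ext f g
  simp only [emb3, Matrix.of_apply, opAt, dif_pos (show 0 + 1 < 3 by omega), dif_pos hi]
  rw [Fin.prod_univ_three]
  norm_num
  have key : ∏ k : Fin M, (if (k : ℕ) = i ∨ (k : ℕ) = i + 1 then (1 : ℂ)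
      else if f k = g k then 1 else 0) =
      (if f ⟨i + 2, hi2⟩ = g ⟨i + 2, hi2⟩ then (1 : ℂ) else 0) *
      ∏ k : Fin M, (if i ≤ (k : ℕ) ∧ (k : ℕ) < i + 3 then (1 : ℂ)
        else if f k = g k then 1 else 0) := by
    have hsingle : (if f ⟨i + 2, hi2⟩ = g ⟨i + 2, hi2⟩ then (1 : ℂ) else 0) =
        ∏ k : Fin M, (if (k : ℕ) = i + 2 then (if f k = g k then (1 : ℂ) else 0) else 1) := by
      rw [prod_single _ ⟨i + 2, hi2⟩ (fun k hk => if_neg (fun hc => hk (Fin.ext hc)))]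
      rw [if_pos rfl]
    rw [hsingle, ← Finset.prod_mul_distrib]
    refine Finset.prod_congr rfl fun k _ => ?_
    by_cases h2 : (k : ℕ) = i + 2
    · rw [if_neg (show ¬((k : ℕ) = i ∨ (k : ℕ) = i + 1) by omega), if_pos h2,
        if_pos (show i ≤ (k : ℕ) ∧ (k : ℕ) < i + 3 by omega), mul_one]
    · by_cases h1 : (k : ℕ) = i ∨ (k : ℕ) = i + 1
      · rw [if_pos h1, if_neg h2,
          if_pos (show i ≤ (k : ℕ) ∧ (k : ℕ) < i + 3 by rcases h1 with h1 | h1 <;> omega),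
          one_mul]
      · rw [if_neg h1, if_neg h2,
          if_neg (show ¬(i ≤ (k : ℕ) ∧ (k : ℕ) < i + 3) by omega), one_mul]
  rw [key]
  by_cases hP : f ⟨i + 2, hi2⟩ = g ⟨i + 2, hi2⟩ <;> simp [hP] <;> ring

lemma emb3_opAt1 {N M : ℕ} (i : ℕ) (h : i + 3 ≤ M)
    (s : Matrix (Fin N × Fin N) (Fin N × Fin N) ℂ) :
    emb3 i h (opAt N 3 s 1) = opAt N M s (i + 1) := by
  have hi : i + 1 + 1 < M := by omega
  have hi0 : i < M := by omega
  ext f g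
  simp only [emb3, Matrix.of_apply, opAt, dif_pos (show 1 + 1 < 3 by omega), dif_pos hi]
  rw [Fin.prod_univ_three]
  norm_num
  have key : ∏ k : Fin M, (if (k : ℕ) = i + 1 ∨ (k : ℕ) = i + 1 + 1 then (1 : ℂ)
      else if f k = g k then 1 else 0) =
      (if f ⟨i, hi0⟩ = g ⟨i, hi0⟩ then (1 : ℂ) else 0) *
      ∏ k : Fin M, (if i ≤ (k : ℕ) ∧ (k : ℕ) < i + 3 then (1 : ℂ)
        else if f k = g k then 1 else 0) := by
    have hsingle : (if f ⟨i, hi0⟩ = g ⟨i, hi0⟩ then (1 : ℂ) else 0) =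
        ∏ k : Fin M, (if (k : ℕ) = i then (if f k = g k then (1 : ℂ) else 0) else 1) := by
      rw [prod_single _ ⟨i, hi0⟩ (fun k hk => if_neg (fun hc => hk (Fin.ext hc)))]
      rw [if_pos rfl]
    rw [hsingle, ← Finset.prod_mul_distrib]
    refine Finset.prod_congr rfl fun k _ => ?_
    by_cases h2 : (k : ℕ) = i
    · rw [if_neg (show ¬((k : ℕ) = i + 1 ∨ (k : ℕ) = i + 1 + 1) by omega), if_pos h2,
        if_pos (show i ≤ (k : ℕ) ∧ (k : ℕ) < i + 3 by omega), mul_one]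
    · by_cases h1 : (k : ℕ) = i + 1 ∨ (k : ℕ) = i + 1 + 1
      · rw [if_pos h1, if_neg h2,
          if_pos (show i ≤ (k : ℕ) ∧ (k : ℕ) < i + 3 by rcases h1 with h1 | h1 <;> omega),
          one_mul]
      · rw [if_neg h1, if_neg h2,
          if_neg (show ¬(i ≤ (k : ℕ) ∧ (k : ℕ) < i + 3) by omega), one_mul]
  rw [key]
  by_cases hP : f ⟨i, hi0⟩ = g ⟨i, hi0⟩ <;> simp [hP] <;> ring

lemma braid_lift {N M : ℕ} (s : Matrix (Fin N × Fin N) (Fin N × Fin N) ℂ)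
    (hbraid : opAt N 3 s 0 * opAt N 3 s 1 * opAt N 3 s 0 =
      opAt N 3 s 1 * opAt N 3 s 0 * opAt N 3 s 1)
    (i : ℕ) (h3 : i + 3 ≤ M) :
    opAt N M s i * opAt N M s (i + 1) * opAt N M s i =
      opAt N M s (i + 1) * opAt N M s i * opAt N M s (i + 1) := by
  rw [← emb3_opAt0 i h3 s, ← emb3_opAt1 i h3 s, ← emb3_mul, ← emb3_mul, ← emb3_mul,
    ← emb3_mul, hbraid]


variable {N M : ℕ}

/-- `σ_{n←1} = σ_{n-1,n} ⋯ σ_{1,2}` (0-indexed positions `n-1, …, 0`). -/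
noncomputable def Qp (s : Matrix (Fin N × Fin N) (Fin N × Fin N) ℂ) (n : ℕ) :
    Matrix (Fin M → Fin N) (Fin M → Fin N) ℂ :=
  ((List.range n).map fun t => opAt N M s (n - 1 - t)).prod

/-- `σ^{-1}_{n←1} = σ^{-1}_{1,2} ⋯ σ^{-1}_{n-1,n}`. -/
noncomputable def Pp (s : Matrix (Fin N × Fin N) (Fin N × Fin N) ℂ) (n : ℕ) :
    Matrix (Fin M → Fin N) (Fin M → Fin N) ℂ :=
  ((List.range n).map fun t => opAt N M s⁻¹ t).prod

lemma Qp_succ (s : Matrix (Fin N × Fin N) (Fin N × Fin N) ℂ) (n : ℕ) :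
    Qp (M := M) s (n + 1) = opAt N M s n * Qp s n := by
  have h1 : ((List.range (n + 1)).map fun t => opAt N M s (n + 1 - 1 - t)) =
      opAt N M s n :: ((List.range n).map fun t => opAt N M s (n - 1 - t)) := by
    rw [List.range_succ_eq_map, List.map_cons, List.map_map]
    have hf : ((fun t => opAt N M s (n + 1 - 1 - t)) ∘ Nat.succ) =
        fun t => opAt N M s (n - 1 - t) := by
      funext t
      show opAt N M s (n + 1 - 1 - (t + 1)) = opAt N M s (n - 1 - t)
      exact congrArg (opAt N M s) (by omega)
    rw [hf, show opAt N M s (n + 1 - 1 - 0) = opAt N M s n from congrArg _ (by omega)]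
  unfold Qp
  rw [h1, List.prod_cons]

lemma Pp_succ (s : Matrix (Fin N × Fin N) (Fin N × Fin N) ℂ) (n : ℕ) :
    Pp (M := M) s (n + 1) = Pp s n * opAt N M s⁻¹ n := by
  unfold Pp
  rw [List.range_succ, List.map_append, List.prod_append, List.map_singleton,
    List.prod_singleton]

lemma opAt_inv_mul (s : Matrix (Fin N × Fin N) (Fin N × Fin N) ℂ) (hinv : IsUnit s) (i : ℕ) :
    opAt N M s⁻¹ i * opAt N M s i = 1 := by
  rw [← opAt_mul, Matrix.nonsing_inv_mul s ((Matrix.isUnit_iff_isUnit_det s).mp hinv),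
    opAt_one]

lemma opAt_mul_inv (s : Matrix (Fin N × Fin N) (Fin N × Fin N) ℂ) (hinv : IsUnit s) (i : ℕ) :
    opAt N M s i * opAt N M s⁻¹ i = 1 := by
  rw [← opAt_mul, Matrix.mul_nonsing_inv s ((Matrix.isUnit_iff_isUnit_det s).mp hinv),
    opAt_one]

lemma PQ_one (s : Matrix (Fin N × Fin N) (Fin N × Fin N) ℂ) (hinv : IsUnit s) (n : ℕ) :
    Pp (M := M) s n * Qp s n = 1 := by
  induction n with
  | zero => simp [Pp, Qp]
  | succ n ih =>
    rw [Pp_succ, Qp_succ, mul_assoc, ← mul_assoc (opAt N M s⁻¹ n), opAt_inv_mul s hinv,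
      one_mul, ih]

lemma QP_one (s : Matrix (Fin N × Fin N) (Fin N × Fin N) ℂ) (hinv : IsUnit s) (n : ℕ) :
    Qp (M := M) s n * Pp s n = 1 := by
  induction n with
  | zero => simp [Pp, Qp]
  | succ n ih =>
    rw [Qp_succ, Pp_succ, mul_assoc, ← mul_assoc (Qp (M := M) s n), ih, one_mul,
      opAt_mul_inv s hinv]

lemma comm_Qp (s : Matrix (Fin N × Fin N) (Fin N × Fin N) ℂ) (p : ℕ) :
    ∀ m, m + 1 ≤ p → opAt N M s p * Qp s m = Qp s m * opAt N M s p := by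
  intro m
  induction m with
  | zero => intro _; simp [Qp]
  | succ m ih =>
    intro hp
    rw [Qp_succ, ← mul_assoc, ← opAt_comm s s (show m + 2 ≤ p by omega), mul_assoc,
      ih (by omega), ← mul_assoc]

lemma key_comm (s : Matrix (Fin N × Fin N) (Fin N × Fin N) ℂ)
    (hbraid : opAt N 3 s 0 * opAt N 3 s 1 * opAt N 3 s 0 =
      opAt N 3 s 1 * opAt N 3 s 0 * opAt N 3 s 1)
    (i : ℕ) (h1 : 1 ≤ i) :
    ∀ n, i < n → n + 1 ≤ M → Qp s n * opAt N M s i = opAt N M s (i - 1) * Qp s n := by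
  intro n
  induction n with
  | zero => intro h _; exact absurd h (Nat.not_lt_zero i)
  | succ n ih =>
    intro hin hM
    by_cases hn : i < n
    · rw [Qp_succ, mul_assoc, ih hn (by omega), ← mul_assoc,
        ← opAt_comm s s (show (i - 1) + 2 ≤ n by omega), mul_assoc, ← Qp_succ]
    · have hni : n = i := by omega
      subst hni
      have hq : Qp (M := M) s n = opAt N M s (n - 1) * Qp s (n - 1) := by
        conv_lhs => rw [show n = (n - 1) + 1 by omega]
        rw [Qp_succ]
      have hb := braid_lift s hbraid (n - 1) (show (n - 1) + 3 ≤ M by omega)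
      rw [show n - 1 + 1 = n by omega] at hb
      rw [Qp_succ, hq, mul_assoc, mul_assoc, ← comm_Qp s n (n - 1) (by omega),
        ← mul_assoc, ← mul_assoc, ← hb]
      simp only [mul_assoc]

lemma chain_comm (s : Matrix (Fin N × Fin N) (Fin N × Fin N) ℂ)
    (hbraid : opAt N 3 s 0 * opAt N 3 s 1 * opAt N 3 s 0 =
      opAt N 3 s 1 * opAt N 3 s 0 * opAt N 3 s 1)
    (n : ℕ) (hM : n + 1 ≤ M) :
    ∀ j b, 1 ≤ b → b + j ≤ n →
      Qp s n * ((List.range j).map fun t => opAt N M s (b + t)).prod =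
        ((List.range j).map fun t => opAt N M s (b - 1 + t)).prod * Qp s n := by
  intro j
  induction j with
  | zero => intro b _ _; simp
  | succ j ih =>
    intro b hb hbj
    have hsplit : ∀ c : ℕ, ((List.range (j + 1)).map fun t => opAt N M s (c + t)).prod =
        opAt N M s c * ((List.range j).map fun t => opAt N M s (c + 1 + t)).prod := by
      intro c
      rw [List.range_succ_eq_map, List.map_cons, List.prod_cons, List.map_map]
      have hf : ((fun t => opAt N M s (c + t)) ∘ Nat.succ) =
          fun t => opAt N M s (c + 1 + t) := by
        funext t
        show opAt N M s (c + (t + 1)) = opAt N M s (c + 1 + t)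
        exact congrArg (opAt N M s) (by omega)
      rw [hf, show opAt N M s (c + 0) = opAt N M s c from congrArg _ (by omega)]
    have hf : (fun t => opAt N M s (b + 1 - 1 + t)) = fun t => opAt N M s (b - 1 + 1 + t) := by
      funext t
      exact congrArg (opAt N M s) (by omega)
    rw [hsplit b, ← mul_assoc, key_comm s hbraid b hb n (by omega) hM, mul_assoc,
      ih (b + 1) (by omega) (by omega), ← mul_assoc, hsplit (b - 1), hf]

lemma sigmaFwd_comm (s : Matrix (Fin N × Fin N) (Fin N × Fin N) ℂ)
    (hbraid : opAt N 3 s 0 * opAt N 3 s 1 * opAt N 3 s 0 =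
      opAt N 3 s 1 * opAt N 3 s 0 * opAt N 3 s 1)
    (n k m : ℕ) (hM : n + 1 ≤ M) (hk : 1 ≤ k) (hkm : k ≤ m) (hm : m ≤ n) :
    Qp s n * sigmaFwd N M s 1 k m = sigmaFwd N M s 0 k m * Qp s n := by
  unfold sigmaFwd
  have hf1 : (fun t => opAt N M s (1 + k - 1 + t)) = fun t => opAt N M s (k + t) := by
    funext t
    exact congrArg (opAt N M s) (by omega)
  have hf0 : (fun t => opAt N M s (0 + k - 1 + t)) = fun t => opAt N M s (k - 1 + t) := by
    funext t
    exact congrArg (opAt N M s) (by omega)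
  rw [hf1, hf0]
  exact chain_comm s hbraid n hM (m - k) k hk (by omega)

lemma Aop_comm (s : Matrix (Fin N × Fin N) (Fin N × Fin N) ℂ)
    (hbraid : opAt N 3 s 0 * opAt N 3 s 1 * opAt N 3 s 0 =
      opAt N 3 s 1 * opAt N 3 s 0 * opAt N 3 s 1)
    (n : ℕ) (hM : n + 1 ≤ M) :
    ∀ m, m ≤ n → Qp s n * Aop N M s 1 m = Aop N M s 0 m * Qp s n := by
  intro m
  induction m using Nat.strong_induction_on with
  | _ m ih =>
    intro hm
    match m with
    | 0 => simp [Aop]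
    | 1 => simp [Aop]
    | (p + 2) =>
      simp only [Aop]
      have hs : Qp (M := M) s n * (1 + ∑ k ∈ Finset.Icc 1 (p + 1),
          ((-1 : ℂ) ^ (p + 2 - k)) • sigmaFwd N M s 1 k (p + 2)) =
          (1 + ∑ k ∈ Finset.Icc 1 (p + 1),
            ((-1 : ℂ) ^ (p + 2 - k)) • sigmaFwd N M s 0 k (p + 2)) * Qp s n := by
        rw [mul_add, add_mul, mul_one, one_mul, Finset.mul_sum, Finset.sum_mul]
        congr 1
        refine Finset.sum_congr rfl fun k hk => ?_
        rw [Finset.mem_Icc] at hk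
        rw [Matrix.mul_smul, sigmaFwd_comm s hbraid n k (p + 2) hM hk.1 (by omega)
          (by omega), smul_mul_assoc]
      rw [← mul_assoc, hs, mul_assoc, ih (p + 1) (by omega) (by omega), ← mul_assoc]

end QA


/-- If the invertible `σ` satisfies the braid relation, then
`σ^{-1}_{r←1} A_{1→r−1} = A_{2→r} σ^{-1}_{r←1}`, where
`σ^{-1}_{r←k} = σ^{-1}_{k,k+1} ⋯ σ^{-1}_{r−1,r}`, `A_{1→r-1}` is the quantum antisymmetrizer
on the first `r−1` tensor factors and `A_{2→r}` is the same operator shifted to factors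
`2,…,r`. -/
theorem shifted_antisymmetrizer_identity (N M : ℕ)
    (s : Matrix (Fin N × Fin N) (Fin N × Fin N) ℂ) (hinv : IsUnit s)
    (hbraid : opAt N 3 s 0 * opAt N 3 s 1 * opAt N 3 s 0 =
      opAt N 3 s 1 * opAt N 3 s 0 * opAt N 3 s 1)
    (r : ℕ) (h1 : 1 ≤ r) (hr : r ≤ M) :
    ((List.range (r - 1)).map fun t => opAt N M s⁻¹ t).prod * Aop N M s 0 (r - 1) =
      Aop N M s 1 (r - 1) * ((List.range (r - 1)).map fun t => opAt N M s⁻¹ t).prod := by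
  have hM : (r - 1) + 1 ≤ M := by omega
  have hc := QA.Aop_comm (M := M) s hbraid (r - 1) hM (r - 1) le_rfl
  have hpq := QA.PQ_one (M := M) s hinv (r - 1)
  have hqp := QA.QP_one (M := M) s hinv (r - 1)
  show QA.Pp (M := M) s (r - 1) * Aop N M s 0 (r - 1) =
    Aop N M s 1 (r - 1) * QA.Pp (M := M) s (r - 1)
  calc QA.Pp (M := M) s (r - 1) * Aop N M s 0 (r - 1)
      = QA.Pp (M := M) s (r - 1) * Aop N M s 0 (r - 1) *
          (QA.Qp (M := M) s (r - 1) * QA.Pp (M := M) s (r - 1)) := by rw [hqp, mul_one]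
    _ = QA.Pp (M := M) s (r - 1) * (Aop N M s 0 (r - 1) * QA.Qp (M := M) s (r - 1)) *
          QA.Pp (M := M) s (r - 1) := by simp only [mul_assoc]
    _ = QA.Pp (M := M) s (r - 1) * (QA.Qp (M := M) s (r - 1) * Aop N M s 1 (r - 1)) *
          QA.Pp (M := M) s (r - 1) := by rw [hc]
    _ = (QA.Pp (M := M) s (r - 1) * QA.Qp (M := M) s (r - 1)) *
          (Aop N M s 1 (r - 1) * QA.Pp (M := M) s (r - 1)) := by simp only [mul_assoc]
    _ = Aop N M s 1 (r - 1) * QA.Pp (M := M) s (r - 1) := by rw [hpq, one_mul]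
end

section
/- Let g be a finite-dimensional Lie algebra with basis (x_i) and structure constants C^k_{ij}. In the algebra generated by even generators χ_i, odd generators γ_i, Ω^i with relations: χ's satisfy the Lie algebra relations χ_iχ_j − χ_jχ_i = C^k_{ij}χ_k; γ's and Ω's anticommute among themselves; γ_jΩ^i + Ω^iγ_j = δ^i_j; χ_jΩ^i − Ω^iχ_j = Ω^k C^i_{kj}; and γ_iχ_j − χ_jγ_i = C^k_{ji}γ_k — the element Q = Ω^i χ_i − (1/2) Ω^j Ω^i C^k_{ij} γ_k satisfies Q² = 0. -/
open scoped BigOperators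

/-- The classical BRST operator `Q = Ω^i χ_i − (1/2) Ω^j Ω^i C^k_{ij} γ_k`. -/
noncomputable def brstQ {N : ℕ} {A : Type*} [Ring A] [Algebra ℂ A]
    (C : Fin N → Fin N → Fin N → ℂ) (χ γ Ω : Fin N → A) : A :=
  (∑ i, Ω i * χ i) - (2⁻¹ : ℂ) • ∑ i, ∑ j, ∑ k, C k i j • (Ω j * Ω i * γ k)

/-!
Write `Q = S + ½ E` with `S = Ω^i χ_i` and `E = q_k γ_k`, where `q_k = C^k_{ij} Ω^i Ω^j`.
The `q_k` are even: they commute with every `Ω^i` and with each other. Moving `χ`'s and `γ`'s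
to the right through the relations gives, with `τ_k = C^l_{kj} Ω^j γ_l`,
`2 S² = -q_k χ_k`, `S E + E S = q_k χ_k - q_k τ_k` and `E² = 2 q_k τ_k`;
in `E²` the remaining term `q_k q_l γ_k γ_l` vanishes since the `q`'s commute and the `γ`'s
anticommute. Hence `Q² = S² + ½ (S E + E S) + ¼ E² = 0`.
-/

theorem sum_sum_eq_neg_of_swap {ι M : Type*} [Fintype ι] [AddCommGroup M] {f g : ι → ι → M}
    (h : ∀ i j, f i j = -g j i) : ∑ i, ∑ j, f i j = -∑ i, ∑ j, g i j := by
  simp only [h, Finset.sum_neg_distrib]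
  rw [Finset.sum_comm]

section

variable {A : Type*} [Ring A]

theorem commute_mul_of_anticommute {x y z : A} (hy : x * y + y * x = 0)
    (hz : x * z + z * x = 0) : Commute x (y * z) := by
  have hy' : x * y = -(y * x) := eq_neg_of_add_eq_zero_left hy
  have hz' : x * z = -(z * x) := eq_neg_of_add_eq_zero_left hz
  calc x * (y * z) = -(y * (x * z)) := by rw [← mul_assoc, hy', neg_mul, mul_assoc]
    _ = y * z * x := by rw [hz', mul_neg, neg_neg, mul_assoc]

theorem sum_sum_mul_mul_eq_zero {ι R : Type*} [Fintype ι] [CommRing R] [Algebra R A]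
    [Invertible (2 : R)] {a b : ι → A} (ha : ∀ k l, Commute (a k) (a l))
    (hb : ∀ k l, b k * b l + b l * b k = 0) :
    ∑ k, ∑ l, a k * a l * (b k * b l) = 0 := by
  set X := ∑ k, ∑ l, a k * a l * (b k * b l)
  have hX : X = -X := sum_sum_eq_neg_of_swap fun k l => by
    rw [(ha k l).eq, eq_neg_of_add_eq_zero_left (hb k l), mul_neg]
  calc X = (⅟2 : R) • (X + X) := by rw [← two_smul R, smul_smul, invOf_mul_self, one_smul]
    _ = 0 := by nth_rewrite 2 [hX]; rw [add_neg_cancel, smul_zero]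

theorem gamma_mul_omega {ι : Type*} [DecidableEq ι] {γ Ω : ι → A}
    (hγΩ : ∀ i j, γ j * Ω i + Ω i * γ j = if i = j then 1 else 0)
    (k l : ι) : γ k * Ω l = (if l = k then 1 else 0) - Ω l * γ k :=
  eq_sub_of_add_eq (hγΩ l k)

end

section BRST

variable {ι R A : Type*} [Fintype ι] [CommRing R] [Ring A] [Algebra R A]

def constraintTerm (Ω χ : ι → A) : A := ∑ i, Ω i * χ i

def ghostPair (C : ι → ι → ι → R) (Ω : ι → A) (k : ι) : A := ∑ i, ∑ j, C k i j • (Ω i * Ω j)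

def ghostTerm (C : ι → ι → ι → R) (Ω γ : ι → A) : A := ∑ k, ghostPair C Ω k * γ k

def ghostAdjoint (C : ι → ι → ι → R) (Ω γ : ι → A) (k : ι) : A :=
  ∑ j, ∑ l, C l k j • (Ω j * γ l)

variable {C : ι → ι → ι → R} {χ γ Ω : ι → A}

theorem commute_omega_ghostPair (hΩΩ : ∀ i j, Ω i * Ω j + Ω j * Ω i = 0) (a k : ι) :
    Commute (Ω a) (ghostPair C Ω k) :=
  Commute.sum_right _ _ _ fun i _ => Commute.sum_right _ _ _ fun j _ =>
    (commute_mul_of_anticommute (hΩΩ a i) (hΩΩ a j)).smul_right _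

theorem commute_ghostPair (hΩΩ : ∀ i j, Ω i * Ω j + Ω j * Ω i = 0) (k l : ι) :
    Commute (ghostPair C Ω k) (ghostPair C Ω l) :=
  Commute.sum_left _ _ _ fun i _ => Commute.sum_left _ _ _ fun j _ =>
    ((commute_omega_ghostPair hΩΩ i l).mul_left (commute_omega_ghostPair hΩΩ j l)).smul_left _

theorem constraintTerm_mul_omega (hΩΩ : ∀ i j, Ω i * Ω j + Ω j * Ω i = 0)
    (hχΩ : ∀ i j, χ j * Ω i - Ω i * χ j = ∑ k, C i k j • Ω k) (i : ι) :
    constraintTerm Ω χ * Ω i = -(Ω i * constraintTerm Ω χ) - ghostPair C Ω i := by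
  have hmove (l : ι) : Ω l * χ l * Ω i = -(Ω i * (Ω l * χ l)) + ∑ k, C i k l • (Ω l * Ω k) := by
    rw [mul_assoc, sub_eq_iff_eq_add'.mp (hχΩ i l), mul_add, ← mul_assoc,
      eq_neg_of_add_eq_zero_left (hΩΩ l i), Finset.mul_sum]
    simp only [mul_smul_comm, neg_mul, mul_assoc]
  have hpair : ∑ l, ∑ k, C i k l • (Ω l * Ω k) = -ghostPair C Ω i := by
    refine sum_sum_eq_neg_of_swap fun l k => ?_
    rw [eq_neg_of_add_eq_zero_left (hΩΩ l k), smul_neg]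
  simp only [constraintTerm, Finset.sum_mul, hmove, Finset.sum_add_distrib, hpair,
    Finset.sum_neg_distrib, Finset.mul_sum, sub_eq_add_neg]

theorem constraintTerm_mul_omega_mul_omega (hΩΩ : ∀ i j, Ω i * Ω j + Ω j * Ω i = 0)
    (hχΩ : ∀ i j, χ j * Ω i - Ω i * χ j = ∑ k, C i k j • Ω k) (i j : ι) :
    constraintTerm Ω χ * (Ω i * Ω j)
      = Ω i * Ω j * constraintTerm Ω χ + ghostPair C Ω j * Ω i - ghostPair C Ω i * Ω j := by
  rw [← mul_assoc, constraintTerm_mul_omega hΩΩ hχΩ, sub_mul, neg_mul, mul_assoc,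
    constraintTerm_mul_omega hΩΩ hχΩ, mul_sub, (commute_omega_ghostPair hΩΩ i j).eq]
  noncomm_ring

theorem constraintTerm_mul_ghostPair (hC : ∀ k i j, C k i j = -C k j i)
    (hΩΩ : ∀ i j, Ω i * Ω j + Ω j * Ω i = 0)
    (hχΩ : ∀ i j, χ j * Ω i - Ω i * χ j = ∑ k, C i k j • Ω k) (k : ι) :
    constraintTerm Ω χ * ghostPair C Ω k
      = ghostPair C Ω k * constraintTerm Ω χ
        - 2 • ∑ i, ∑ j, C k i j • (ghostPair C Ω i * Ω j) := by
  have hleft : constraintTerm Ω χ * ghostPair C Ω k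
      = ∑ i, ∑ j, C k i j • (constraintTerm Ω χ * (Ω i * Ω j)) := by
    simp only [ghostPair, Finset.mul_sum, mul_smul_comm]
  have hright : ghostPair C Ω k * constraintTerm Ω χ
      = ∑ i, ∑ j, C k i j • (Ω i * Ω j * constraintTerm Ω χ) := by
    simp only [ghostPair, Finset.sum_mul, smul_mul_assoc]
  have hswap : ∑ i, ∑ j, C k i j • (ghostPair C Ω j * Ω i)
      = -∑ i, ∑ j, C k i j • (ghostPair C Ω i * Ω j) :=
    sum_sum_eq_neg_of_swap fun i j => by rw [hC k i j, neg_smul]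
  rw [hleft, hright]
  simp only [constraintTerm_mul_omega_mul_omega hΩΩ hχΩ, smul_add, smul_sub,
    Finset.sum_add_distrib, Finset.sum_sub_distrib, hswap]
  abel

theorem sum_ghostPair_mul (x : ι → A) :
    ∑ k, ghostPair C Ω k * x k = ∑ i, ∑ j, ∑ k, C k i j • (Ω i * Ω j * x k) := by
  simp only [ghostPair, Finset.sum_mul, smul_mul_assoc]
  exact Finset.sum_comm_cycle.symm

theorem two_smul_constraintTerm_mul_self (hΩΩ : ∀ i j, Ω i * Ω j + Ω j * Ω i = 0)
    (hχΩ : ∀ i j, χ j * Ω i - Ω i * χ j = ∑ k, C i k j • Ω k)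
    (hχχ : ∀ i j, χ i * χ j - χ j * χ i = ∑ k, C k i j • χ k) :
    2 • (constraintTerm Ω χ * constraintTerm Ω χ) = -∑ k, ghostPair C Ω k * χ k := by
  have hSS : constraintTerm Ω χ * constraintTerm Ω χ
      = -∑ j, Ω j * constraintTerm Ω χ * χ j - ∑ k, ghostPair C Ω k * χ k := by
    rw [show constraintTerm Ω χ * constraintTerm Ω χ
        = ∑ j, constraintTerm Ω χ * Ω j * χ j by
      simp only [mul_assoc]; exact Finset.mul_sum _ _ _]
    simp only [constraintTerm_mul_omega hΩΩ hχΩ, sub_mul, neg_mul, Finset.sum_sub_distrib,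
      Finset.sum_neg_distrib]
  have hP : ∑ j, Ω j * constraintTerm Ω χ * χ j = ∑ i, ∑ j, Ω i * Ω j * (χ j * χ i) := by
    simp only [constraintTerm, Finset.mul_sum, Finset.sum_mul, mul_assoc]
  have hP' : ∑ i, ∑ j, Ω i * Ω j * (χ j * χ i) = -∑ i, ∑ j, Ω i * Ω j * (χ i * χ j) := by
    refine sum_sum_eq_neg_of_swap fun i j => ?_
    rw [eq_neg_of_add_eq_zero_left (hΩΩ i j), neg_mul]
  have hF : ∑ k, ghostPair C Ω k * χ k = ∑ i, ∑ j, Ω i * Ω j * (χ i * χ j - χ j * χ i) := by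
    simp only [sum_ghostPair_mul, hχχ, Finset.mul_sum, mul_smul_comm]
  rw [hSS, hP, two_smul]
  nth_rewrite 2 [hP']
  simp only [hF, mul_sub, Finset.sum_sub_distrib]
  abel

theorem constraintTerm_mul_ghostTerm (hC : ∀ k i j, C k i j = -C k j i)
    (hΩΩ : ∀ i j, Ω i * Ω j + Ω j * Ω i = 0)
    (hχΩ : ∀ i j, χ j * Ω i - Ω i * χ j = ∑ k, C i k j • Ω k) :
    constraintTerm Ω χ * ghostTerm C Ω γ
      = ∑ k, ghostPair C Ω k * (constraintTerm Ω χ * γ k)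
        - 2 • ∑ k, ghostPair C Ω k * ghostAdjoint C Ω γ k := by
  have hK : ∑ k, (∑ i, ∑ j, C k i j • (ghostPair C Ω i * Ω j)) * γ k
      = ∑ k, ghostPair C Ω k * ghostAdjoint C Ω γ k := by
    simp only [ghostAdjoint, Finset.sum_mul, Finset.mul_sum, smul_mul_assoc, mul_smul_comm,
      mul_assoc]
    exact Finset.sum_comm_cycle.symm
  simp only [ghostTerm, Finset.mul_sum, ← mul_assoc, constraintTerm_mul_ghostPair hC hΩΩ hχΩ,
    sub_mul, Finset.sum_sub_distrib, smul_mul_assoc, ← Finset.smul_sum, hK]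

variable [DecidableEq ι]

theorem gamma_mul_constraintTerm (hC : ∀ k i j, C k i j = -C k j i)
    (hγΩ : ∀ i j, γ j * Ω i + Ω i * γ j = if i = j then 1 else 0)
    (hγχ : ∀ i j, γ i * χ j - χ j * γ i = ∑ k, C k j i • γ k) (k : ι) :
    γ k * constraintTerm Ω χ
      = χ k + ghostAdjoint C Ω γ k - constraintTerm Ω χ * γ k := by
  have hterm (l : ι) : γ k * (Ω l * χ l)
      = (if l = k then χ l else 0) - Ω l * χ l * γ k - ∑ q, C q l k • (Ω l * γ q) := by
    rw [← mul_assoc, gamma_mul_omega hγΩ, sub_mul, ite_mul, one_mul, zero_mul, mul_assoc,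
      sub_eq_iff_eq_add'.mp (hγχ k l), mul_add, Finset.mul_sum]
    simp only [mul_smul_comm, mul_assoc]
    abel
  have hadj : ∑ l, ∑ q, C q l k • (Ω l * γ q) = -ghostAdjoint C Ω γ k := by
    simp only [ghostAdjoint, ← Finset.sum_neg_distrib, hC _ _ k, neg_smul]
  simp only [constraintTerm, Finset.mul_sum, hterm, Finset.sum_sub_distrib, Fintype.sum_ite_eq',
    Finset.sum_mul, hadj]
  abel

theorem gamma_mul_ghostPair (hC : ∀ k i j, C k i j = -C k j i)
    (hγΩ : ∀ i j, γ j * Ω i + Ω i * γ j = if i = j then 1 else 0) (k l : ι) :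
    γ k * ghostPair C Ω l = ghostPair C Ω l * γ k + 2 • ∑ j, C l k j • Ω j := by
  have hterm (i j : ι) : γ k * (Ω i * Ω j)
      = (if i = k then Ω j else 0) - (if j = k then Ω i else 0) + Ω i * Ω j * γ k := by
    rw [← mul_assoc, gamma_mul_omega hγΩ, sub_mul, ite_mul, one_mul, zero_mul, mul_assoc,
      gamma_mul_omega hγΩ, mul_sub, mul_ite, mul_one, mul_zero]
    noncomm_ring
  have hcontract : ∑ i, ∑ j, C l i j • ((if i = k then Ω j else 0) - (if j = k then Ω i else 0))
      = 2 • ∑ j, C l k j • Ω j := by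
    simp only [smul_sub, smul_ite, smul_zero, Finset.sum_sub_distrib, Fintype.sum_ite_eq']
    rw [Finset.sum_comm]
    simp only [Fintype.sum_ite_eq', hC l _ k, neg_smul, Finset.sum_neg_distrib]
    abel
  simp only [ghostPair, Finset.mul_sum, mul_smul_comm, hterm, smul_add, Finset.sum_add_distrib,
    hcontract, Finset.sum_mul, smul_mul_assoc]
  abel

theorem ghostTerm_mul_constraintTerm (hC : ∀ k i j, C k i j = -C k j i)
    (hγΩ : ∀ i j, γ j * Ω i + Ω i * γ j = if i = j then 1 else 0)
    (hγχ : ∀ i j, γ i * χ j - χ j * γ i = ∑ k, C k j i • γ k) :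
    ghostTerm C Ω γ * constraintTerm Ω χ
      = ∑ k, ghostPair C Ω k * χ k + ∑ k, ghostPair C Ω k * ghostAdjoint C Ω γ k
        - ∑ k, ghostPair C Ω k * (constraintTerm Ω χ * γ k) := by
  simp only [ghostTerm, Finset.sum_mul, mul_assoc, gamma_mul_constraintTerm hC hγΩ hγχ, mul_sub,
    mul_add, Finset.sum_sub_distrib, Finset.sum_add_distrib]

theorem ghostTerm_mul_self [Invertible (2 : R)] (hC : ∀ k i j, C k i j = -C k j i)
    (hγγ : ∀ i j, γ i * γ j + γ j * γ i = 0) (hΩΩ : ∀ i j, Ω i * Ω j + Ω j * Ω i = 0)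
    (hγΩ : ∀ i j, γ j * Ω i + Ω i * γ j = if i = j then 1 else 0) :
    ghostTerm C Ω γ * ghostTerm C Ω γ = 2 • ∑ k, ghostPair C Ω k * ghostAdjoint C Ω γ k := by
  have hγE (k : ι) : γ k * ghostTerm C Ω γ
      = ∑ l, ghostPair C Ω l * (γ k * γ l) + 2 • ghostAdjoint C Ω γ k := by
    simp only [ghostTerm, Finset.mul_sum, ← mul_assoc, gamma_mul_ghostPair hC hγΩ, add_mul,
      Finset.sum_add_distrib, smul_mul_assoc, Finset.sum_mul, ghostAdjoint, Finset.smul_sum]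
    rw [Finset.sum_comm (f := fun l j => 2 • C l k j • (Ω j * γ l))]
  have hcancel : ∑ k, ∑ l, ghostPair C Ω k * ghostPair C Ω l * (γ k * γ l) = 0 :=
    sum_sum_mul_mul_eq_zero (R := R) (commute_ghostPair hΩΩ) hγγ
  rw [ghostTerm]
  nth_rewrite 2 [← ghostTerm]
  simp only [Finset.sum_mul, mul_assoc, hγE, mul_add, Finset.sum_add_distrib, Finset.mul_sum]
  simp only [← mul_assoc (ghostPair C Ω _) (ghostPair C Ω _), hcancel, zero_add, mul_smul_comm,
    Finset.smul_sum]

end BRST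

theorem brstQ_eq_constraintTerm_add_ghostTerm {N : ℕ} {A : Type*} [Ring A] [Algebra ℂ A]
    {C : Fin N → Fin N → Fin N → ℂ} (hC : ∀ k i j, C k i j = -C k j i) (χ γ Ω : Fin N → A) :
    brstQ C χ γ Ω = constraintTerm Ω χ + (2⁻¹ : ℂ) • ghostTerm C Ω γ := by
  have hswap : ∑ i, ∑ j, ∑ k, C k i j • (Ω j * Ω i * γ k) = -ghostTerm C Ω γ := by
    rw [ghostTerm, sum_ghostPair_mul]
    refine sum_sum_eq_neg_of_swap fun i j => ?_
    simp only [hC _ i j, neg_smul, Finset.sum_neg_distrib]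
  rw [brstQ, constraintTerm, hswap, smul_neg, sub_neg_eq_add]

theorem brstQ_squares_to_zero_general (N : ℕ) (A : Type*) [Ring A] [Algebra ℂ A]
    (C : Fin N → Fin N → Fin N → ℂ) (χ γ Ω : Fin N → A)
    (hCanti : ∀ k i j, C k i j = -C k j i)
    (hχχ : ∀ i j, χ i * χ j - χ j * χ i = ∑ k, C k i j • χ k)
    (hγγ : ∀ i j, γ i * γ j + γ j * γ i = 0)
    (hΩΩ : ∀ i j, Ω i * Ω j + Ω j * Ω i = 0)
    (hγΩ : ∀ i j, γ j * Ω i + Ω i * γ j = if i = j then 1 else 0)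
    (hχΩ : ∀ i j, χ j * Ω i - Ω i * χ j = ∑ k, C i k j • Ω k)
    (hγχ : ∀ i j, γ i * χ j - χ j * γ i = ∑ k, C k j i • γ k) :
    brstQ C χ γ Ω * brstQ C χ γ Ω = 0 := by
  have hSS := two_smul_constraintTerm_mul_self hΩΩ hχΩ hχχ
  have hSE := constraintTerm_mul_ghostTerm (γ := γ) hCanti hΩΩ hχΩ
  have hES := ghostTerm_mul_constraintTerm hCanti hγΩ hγχ
  have hEE := ghostTerm_mul_self hCanti hγγ hΩΩ hγΩ
  rw [brstQ_eq_constraintTerm_add_ghostTerm hCanti]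
  simp only [add_mul, mul_add, smul_mul_assoc, mul_smul_comm]
  linear_combination (norm := module) (2⁻¹ : ℂ) • hSS + (2⁻¹ : ℂ) • hSE + (2⁻¹ : ℂ) • hES
    + (4⁻¹ : ℂ) • hEE

/-- For a Lie algebra with structure constants `C^k_{ij}`
(antisymmetric and satisfying the Jacobi identity), in the algebra generated by even
generators `χ_i` and odd generators `γ_i`, `Ω^i` with the relations
`χ_iχ_j − χ_jχ_i = C^k_{ij}χ_k`, `γ`'s and `Ω`'s anticommuting among themselves,
`γ_jΩ^i + Ω^iγ_j = δ^i_j`, `χ_jΩ^i − Ω^iχ_j = Ω^k C^i_{kj}` and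
`γ_iχ_j − χ_jγ_i = C^k_{ji}γ_k`, the element
`Q = Ω^i χ_i − (1/2) Ω^j Ω^i C^k_{ij} γ_k` satisfies `Q² = 0`. -/
theorem brstQ_squares_to_zero (N : ℕ) (A : Type*) [Ring A] [Algebra ℂ A]
    (C : Fin N → Fin N → Fin N → ℂ) (χ γ Ω : Fin N → A)
    (hCanti : ∀ k i j, C k i j = -C k j i)
    (hJacobi : ∀ i j n l,
      (∑ p, C p i j * C l n p) + (∑ p, C p j n * C l i p) + (∑ p, C p n i * C l j p) = 0)
    (hχχ : ∀ i j, χ i * χ j - χ j * χ i = ∑ k, C k i j • χ k)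
    (hγγ : ∀ i j, γ i * γ j + γ j * γ i = 0)
    (hΩΩ : ∀ i j, Ω i * Ω j + Ω j * Ω i = 0)
    (hγΩ : ∀ i j, γ j * Ω i + Ω i * γ j = if i = j then 1 else 0)
    (hχΩ : ∀ i j, χ j * Ω i - Ω i * χ j = ∑ k, C i k j • Ω k)
    (hγχ : ∀ i j, γ i * χ j - χ j * γ i = ∑ k, C k j i • γ k) :
    brstQ C χ γ Ω * brstQ C χ γ Ω = 0 :=
  brstQ_squares_to_zero_general N A C χ γ Ω hCanti hχχ hγγ hΩΩ hγΩ hχΩ hγχ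
end

section
/- For the super-permutation braiding on a Z₂-graded space V with p even and m odd basis vectors, the height of σ (the largest n with A_{1→n} ≠ 0) is infinite if m ≥ 1, and equals p if m = 0. -/
open scoped BigOperators

variable {F : Type*} [Field F]

namespace SupPerm

variable (N M : ℕ)

/-- permutation matrix: `P w f g = δ_{g, f ∘ w}`. -/
def P (w : Equiv.Perm (Fin M)) : Matrix (Fin M → Fin N) (Fin M → Fin N) ℂ :=
  Matrix.of fun f g => if g = f ∘ w then 1 else 0

lemma P_one : P N M 1 = 1 := by
  ext f g
  simp [P, Matrix.one_apply, eq_comm]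

lemma P_mul (v w : Equiv.Perm (Fin M)) : P N M v * P N M w = P N M (v * w) := by
  ext f g
  simp only [P, Matrix.mul_apply, Matrix.of_apply, ite_mul, one_mul, zero_mul,
    Finset.sum_ite_eq', Finset.mem_univ, if_true]
  rw [Equiv.Perm.coe_mul, ← Function.comp_assoc]

lemma P_list_prod (l : List (Equiv.Perm (Fin M))) :
    (l.map (P N M)).prod = P N M l.prod := by
  induction l with
  | nil => simpa using (P_one N M).symm
  | cons a l ih => simp [List.prod_cons, ih, P_mul]

/-- entry formula for `opAt` in the in-range case -/
lemma opAt_apply (s : Matrix (Fin N × Fin N) (Fin N × Fin N) ℂ) (i : ℕ) (h : i + 1 < M)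
    (f g : Fin M → Fin N) :
    opAt N M s i f g =
      s (f ⟨i, by omega⟩, f ⟨i + 1, h⟩) (g ⟨i, by omega⟩, g ⟨i + 1, h⟩) *
        (if ∀ j : Fin M, (j : ℕ) ≠ i → (j : ℕ) ≠ i + 1 → f j = g j then 1 else 0) := by
  rw [opAt, dif_pos h]
  simp only [Matrix.of_apply]
  congr 1
  have : ∀ j : Fin M,
      (if (j : ℕ) = i ∨ (j : ℕ) = i + 1 then (1:ℂ) else if f j = g j then 1 else 0) =
      (if ((j : ℕ) = i ∨ (j : ℕ) = i + 1) ∨ f j = g j then 1 else 0) := by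
    intro j; split_ifs <;> tauto
  rw [Finset.prod_congr rfl (fun j _ => this j), Finset.prod_boole]
  simp only [Finset.mem_univ, forall_true_left]
  congr 1
  rw [eq_iff_iff]
  constructor
  · intro hh j hj1 hj2; rcases hh j with h' | h' <;> tauto
  · intro hh j; by_cases h1 : (j:ℕ) = i; · tauto
    by_cases h2 : (j:ℕ) = i + 1; · tauto
    exact Or.inr (hh j h1 h2)


/-- swap of positions `i, i+1` as a permutation of `Fin M` (identity if out of range). -/
def nswap (i : ℕ) : Equiv.Perm (Fin M) :=
  if h : i + 1 < M then Equiv.swap ⟨i, by omega⟩ ⟨i + 1, h⟩ else 1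

lemma nswap_apply_of_lt (i : ℕ) (h : i + 1 < M) (j : Fin M) (hj : (j : ℕ) < i) :
    nswap M i j = j := by
  rw [nswap, dif_pos h]
  apply Equiv.swap_apply_of_ne_of_ne <;> (intro hc; subst hc; simp at hj <;> omega)

lemma nswap_apply_of_gt (i : ℕ) (h : i + 1 < M) (j : Fin M) (hj : i + 1 < (j : ℕ)) :
    nswap M i j = j := by
  rw [nswap, dif_pos h]
  apply Equiv.swap_apply_of_ne_of_ne <;> (intro hc; subst hc; simp at hj <;> omega)

lemma nswap_apply_snd (i : ℕ) (h : i + 1 < M) :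
    nswap M i ⟨i + 1, h⟩ = ⟨i, by omega⟩ := by
  rw [nswap, dif_pos h]; exact Equiv.swap_apply_right _ _

lemma nswap_sign (i : ℕ) (h : i + 1 < M) :
    Equiv.Perm.sign (nswap M i) = -1 := by
  rw [nswap, dif_pos h]
  apply Equiv.Perm.sign_swap
  intro hc
  have := congrArg Fin.val hc
  simp at this

/-- `σ_{k→n}` as a permutation. -/
def cyc (k n : ℕ) : Equiv.Perm (Fin M) :=
  ((List.range (n - k)).map fun t => nswap M (k - 1 + t)).prod

lemma cyc_of_le (k n : ℕ) (h : n ≤ k) : cyc M k n = 1 := by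
  simp [cyc, Nat.sub_eq_zero_of_le h]

lemma cyc_cons (k n : ℕ) (hk : 1 ≤ k) (h : k < n) :
    cyc M k n = nswap M (k - 1) * cyc M (k + 1) n := by
  unfold cyc
  have h1 : n - k = (n - (k + 1)) + 1 := by omega
  rw [h1, List.range_succ_eq_map, List.map_cons, List.prod_cons, List.map_map]
  congr 2
  apply List.map_congr_left
  intro t _
  simp only [Function.comp_apply]
  congr 1
  omega

lemma cyc_fix (d : ℕ) : ∀ k n, 1 ≤ k → k + d = n → n ≤ M →
    ∀ j : Fin M, n ≤ (j : ℕ) → cyc M k n j = j := by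
  induction d with
  | zero => intro k n hk hkn hn j hj; rw [cyc_of_le M k n (by omega)]; rfl
  | succ d ih =>
    intro k n hk hkn hn j hj
    rw [cyc_cons M k n hk (by omega), Equiv.Perm.mul_apply,
      ih (k + 1) n (by omega) (by omega) hn j hj]
    have hkM : (k - 1) + 1 < M := by omega
    exact nswap_apply_of_gt M (k - 1) hkM j (by omega)

lemma cyc_last (d : ℕ) : ∀ k n (hk : 1 ≤ k) (hkn : k + d = n) (hn : n ≤ M),
    cyc M k n ⟨n - 1, by omega⟩ = ⟨k - 1, by omega⟩ := by
  induction d with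
  | zero =>
    intro k n hk hkn hn
    rw [cyc_of_le M k n (by omega)]
    apply Fin.ext; simp; omega
  | succ d ih =>
    intro k n hk hkn hn
    rw [cyc_cons M k n hk (by omega), Equiv.Perm.mul_apply,
      ih (k + 1) n (by omega) (by omega) hn]
    have hkM : (k - 1) + 1 < M := by omega
    have : (⟨k + 1 - 1, by omega⟩ : Fin M) = ⟨(k - 1) + 1, hkM⟩ := by
      apply Fin.ext; simp; omega
    rw [this, nswap_apply_snd M (k - 1) hkM]

lemma cyc_sign (d : ℕ) : ∀ k n, 1 ≤ k → k + d = n → n ≤ M →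
    Equiv.Perm.sign (cyc M k n) = (-1) ^ d := by
  induction d with
  | zero => intro k n hk hkn hn; rw [cyc_of_le M k n (by omega)]; simp
  | succ d ih =>
    intro k n hk hkn hn
    rw [cyc_cons M k n hk (by omega), map_mul,
      ih (k + 1) n (by omega) (by omega) hn,
      nswap_sign M (k - 1) (by omega)]
    rw [pow_succ]
    exact mul_comm _ _


lemma opAt_perm (s : Matrix (Fin N × Fin N) (Fin N × Fin N) ℂ)
    (hs : ∀ a b c d : Fin N, s (a, b) (c, d) =
      (if a = d then (1:ℂ) else 0) * (if b = c then 1 else 0)) (i : ℕ) :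
    opAt N M s i = P N M (nswap M i) := by
  by_cases h : i + 1 < M
  · ext f g
    rw [opAt_apply N M s i h, hs]
    rw [P, Matrix.of_apply, nswap, dif_pos h]
    set a : Fin M := ⟨i, by omega⟩ with ha
    set b : Fin M := ⟨i + 1, h⟩ with hb
    by_cases hg : g = f ∘ (Equiv.swap a b)
    · rw [if_pos hg]
      subst hg
      have h1 : (f ∘ (Equiv.swap a b)) b = f a := by
        simp [Equiv.swap_apply_right]
      have h2 : (f ∘ (Equiv.swap a b)) a = f b := by
        simp [Equiv.swap_apply_left]
      have h3 : ∀ j : Fin M, (j:ℕ) ≠ i → (j:ℕ) ≠ i + 1 → f j = (f ∘ Equiv.swap a b) j := by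
        intro j hj1 hj2
        simp only [Function.comp_apply]
        rw [Equiv.swap_apply_of_ne_of_ne]
        · intro hc; apply hj1; rw [hc]
        · intro hc; apply hj2; rw [hc]
      rw [h1, h2, if_pos rfl, if_pos rfl, if_pos h3]
      norm_num
    · rw [if_neg hg]
      have hne : ¬ ∀ j : Fin M, g j = f (Equiv.swap a b j) := by
        intro hc; exact hg (funext fun j => hc j)
      obtain ⟨j, hj⟩ := not_forall.mp hne
      by_cases hji : (j : ℕ) = i
      · have hja : j = a := Fin.ext hji
        rw [hja, Equiv.swap_apply_left] at hj
        rw [if_neg (fun hc : f b = g a => hj hc.symm)]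
        ring
      · by_cases hji2 : (j : ℕ) = i + 1
        · have hjb : j = b := Fin.ext hji2
          rw [hjb, Equiv.swap_apply_right] at hj
          rw [if_neg (fun hc : f a = g b => hj hc.symm)]
          ring
        · have hjs : Equiv.swap a b j = j := by
            apply Equiv.swap_apply_of_ne_of_ne
            · intro hc; apply hji; rw [hc]
            · intro hc; apply hji2; rw [hc]
          rw [hjs] at hj
          rw [if_neg (fun hc : (∀ j : Fin M, (j:ℕ) ≠ i → (j:ℕ) ≠ i + 1 → f j = g j) =>
            hj (hc j hji hji2).symm)]
          ring
  · rw [opAt, dif_neg h, nswap, dif_neg h, P_one]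

lemma sigmaFwd_eq (s : Matrix (Fin N × Fin N) (Fin N × Fin N) ℂ)
    (hs : ∀ a b c d : Fin N, s (a, b) (c, d) =
      (if a = d then (1:ℂ) else 0) * (if b = c then 1 else 0)) (k n : ℕ) (hk : 1 ≤ k) :
    sigmaFwd N M s 0 k n = P N M (cyc M k n) := by
  unfold sigmaFwd cyc
  rw [← P_list_prod, List.map_map]
  congr 1
  apply List.map_congr_left
  intro t _
  simp only [Function.comp_apply]
  rw [show 0 + k - 1 + t = k - 1 + t by omega]
  exact opAt_perm N M s hs _


/-- permutations fixing all positions `≥ n`. -/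
def Sset (n : ℕ) : Finset (Equiv.Perm (Fin M)) :=
  Finset.univ.filter fun w => ∀ j : Fin M, n ≤ (j : ℕ) → w j = j

lemma mem_Sset {n : ℕ} {w : Equiv.Perm (Fin M)} :
    w ∈ Sset M n ↔ ∀ j : Fin M, n ≤ (j : ℕ) → w j = j := by
  simp [Sset]

lemma Sset_one_eq : Sset M 1 = {1} := by
  ext w
  simp only [Finset.mem_singleton, mem_Sset]
  constructor
  · intro hw
    refine Equiv.ext fun j => ?_
    show w j = j
    rcases Nat.lt_or_ge (j : ℕ) 1 with hj | hj
    · by_contra hne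
      have h1 : 1 ≤ ((w j : Fin M) : ℕ) := by
        by_contra h2
        exact hne (Fin.ext (by omega))
      have h3 := hw (w j) h1
      exact hne (w.injective h3)
    · exact hw j hj
  · rintro rfl j _; rfl

lemma Sset_zero_eq : Sset M 0 = {1} := by
  ext w
  simp only [Finset.mem_singleton, mem_Sset]
  constructor
  · intro hw
    refine Equiv.ext fun j => ?_
    exact hw j (Nat.zero_le _)
  · rintro rfl j _; rfl

lemma Aop_sum (s : Matrix (Fin N × Fin N) (Fin N × Fin N) ℂ)
    (hs : ∀ a b c d : Fin N, s (a, b) (c, d) =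
      (if a = d then (1:ℂ) else 0) * (if b = c then 1 else 0)) :
    ∀ n, n ≤ M →
      Aop N M s 0 n = ∑ w ∈ Sset M n, ((Equiv.Perm.sign w : ℤ) : ℂ) • P N M w := by
  intro n
  induction n using Nat.strong_induction_on with
  | _ n ih =>
  rcases n with _ | _ | n
  · intro _
    rw [show Aop N M s 0 0 = 1 from rfl, Sset_zero_eq, Finset.sum_singleton]
    simp [P_one]
  · intro _
    rw [show Aop N M s 0 1 = 1 from rfl, Sset_one_eq, Finset.sum_singleton]
    simp [P_one]
  · intro h
    have e1 : Aop N M s 0 (n + 2) =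
        (1 + ∑ k ∈ Finset.Icc 1 (n + 1),
          ((-1 : ℂ) ^ (n + 2 - k)) • sigmaFwd N M s 0 k (n + 2)) * Aop N M s 0 (n + 1) := rfl
    rw [e1, ih (n + 1) (by omega) (by omega)]
    have e2 : ∀ k ∈ Finset.Icc 1 (n + 1),
        ((-1 : ℂ) ^ (n + 2 - k)) • sigmaFwd N M s 0 k (n + 2) =
        ((-1 : ℂ) ^ (n + 2 - k)) • P N M (cyc M k (n + 2)) := fun k hk => by
      rw [sigmaFwd_eq N M s hs k (n + 2) (Finset.mem_Icc.mp hk).1]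
    rw [Finset.sum_congr rfl e2]
    have e3 : (1 : Matrix (Fin M → Fin N) (Fin M → Fin N) ℂ) +
        ∑ k ∈ Finset.Icc 1 (n + 1), ((-1 : ℂ) ^ (n + 2 - k)) • P N M (cyc M k (n + 2)) =
        ∑ k ∈ Finset.Icc 1 (n + 2), ((-1 : ℂ) ^ (n + 2 - k)) • P N M (cyc M k (n + 2)) := by
      have hins : Finset.Icc 1 (n + 2) = insert (n + 2) (Finset.Icc 1 (n + 1)) := by
        ext x; simp only [Finset.mem_Icc, Finset.mem_insert]; omega
      rw [hins, Finset.sum_insert (by simp)]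
      congr 1
      rw [Nat.sub_self, pow_zero, cyc_of_le M (n + 2) (n + 2) le_rfl, P_one, one_smul]
    rw [e3, Finset.sum_mul]
    have e4 : ∀ k ∈ Finset.Icc 1 (n + 2),
        (((-1 : ℂ) ^ (n + 2 - k)) • P N M (cyc M k (n + 2))) *
          (∑ w ∈ Sset M (n + 1), ((Equiv.Perm.sign w : ℤ) : ℂ) • P N M w) =
        ∑ w ∈ Sset M (n + 1),
          ((Equiv.Perm.sign (cyc M k (n + 2) * w) : ℤ) : ℂ) • P N M (cyc M k (n + 2) * w) := by
      intro k hk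
      rw [Finset.mul_sum]
      refine Finset.sum_congr rfl fun w hw => ?_
      rw [smul_mul_assoc, mul_smul_comm, smul_smul, P_mul]
      congr 1
      rw [map_mul, cyc_sign M (n + 2 - k) k (n + 2) (Finset.mem_Icc.mp hk).1 (by
        have := (Finset.mem_Icc.mp hk).2; omega) h]
      push_cast [Units.val_mul, Units.val_pow_eq_pow_val]
      norm_num
    rw [Finset.sum_congr rfl e4, ← Finset.sum_product']
    have hlt : n + 1 < M := by omega
    refine Finset.sum_bij'
      (fun x _ => cyc M x.1 (n + 2) * x.2)
      (fun v _ => (((v ⟨n + 1, hlt⟩ : Fin M) : ℕ) + 1,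
        (cyc M (((v ⟨n + 1, hlt⟩ : Fin M) : ℕ) + 1) (n + 2))⁻¹ * v))
      ?_ ?_ ?_ ?_ ?_
    · rintro ⟨k, w⟩ hx
      rw [Finset.mem_product] at hx
      obtain ⟨hk, hw⟩ := hx
      rw [Finset.mem_Icc] at hk
      rw [mem_Sset]
      intro j hj
      rw [Equiv.Perm.mul_apply, (mem_Sset M).mp hw j (by omega),
        cyc_fix M (n + 2 - k) k (n + 2) hk.1 (by omega) h j hj]
    · intro v hv
      rw [mem_Sset] at hv
      have hval : ((v ⟨n + 1, hlt⟩ : Fin M) : ℕ) < n + 2 := by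
        rcases Nat.lt_or_ge ((v ⟨n + 1, hlt⟩ : Fin M) : ℕ) (n + 2) with hc | hc
        · exact hc
        · exfalso
          have h5 := hv (v ⟨n + 1, hlt⟩) hc
          have h6 := v.injective h5
          have h7 : ((v ⟨n + 1, hlt⟩ : Fin M) : ℕ) = n + 1 := by rw [h6]
          rw [h7] at hc
          omega
      set k' := ((v ⟨n + 1, hlt⟩ : Fin M) : ℕ) + 1 with hk'
      rw [Finset.mem_product, Finset.mem_Icc]
      constructor
      · omega
      · rw [mem_Sset]
        intro j hj
        rcases Nat.lt_or_ge (j : ℕ) (n + 2) with hj2 | hj2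
        · have hjeq : j = ⟨n + 1, hlt⟩ := Fin.ext (by simp; omega)
          subst hjeq
          have hcl : cyc M k' (n + 2) ⟨n + 1, hlt⟩ = v ⟨n + 1, hlt⟩ := by
            have := cyc_last M (n + 2 - k') k' (n + 2) (by omega) (by omega) h
            have heq1 : (⟨n + 2 - 1, by omega⟩ : Fin M) = ⟨n + 1, hlt⟩ := Fin.ext (by simp)
            have heq2 : (⟨k' - 1, by omega⟩ : Fin M) = v ⟨n + 1, hlt⟩ := Fin.ext (by
              simp only [Fin.val_mk]
              omega)
            rw [heq1, heq2] at this
            exact this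
          rw [Equiv.Perm.mul_apply, Equiv.Perm.inv_eq_iff_eq]
          exact hcl.symm
        · have hvj : v j = j := hv j hj2
          have hcj : cyc M k' (n + 2) j = j :=
            cyc_fix M (n + 2 - k') k' (n + 2) (by omega) (by omega) h j hj2
          rw [Equiv.Perm.mul_apply, hvj, Equiv.Perm.inv_eq_iff_eq]
          exact hcj.symm
    · rintro ⟨k, w⟩ hx
      rw [Finset.mem_product] at hx
      obtain ⟨hk, hw⟩ := hx
      rw [Finset.mem_Icc] at hk
      have hkey : ((((cyc M k (n + 2) * w) ⟨n + 1, hlt⟩ : Fin M) : ℕ) + 1) = k := by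
        rw [Equiv.Perm.mul_apply, (mem_Sset M).mp hw ⟨n + 1, hlt⟩ (by simp)]
        have := cyc_last M (n + 2 - k) k (n + 2) hk.1 (by omega) h
        have heq1 : (⟨n + 2 - 1, by omega⟩ : Fin M) = ⟨n + 1, hlt⟩ := Fin.ext (by simp)
        rw [heq1] at this
        rw [this]
        simp
        omega
      refine Prod.ext ?_ ?_
      · exact hkey
      · show (cyc M _ (n + 2))⁻¹ * (cyc M k (n + 2) * w) = w
        rw [hkey, inv_mul_cancel_left]
    · intro v hv
      exact mul_inv_cancel_left _ _
    · rintro ⟨k, w⟩ _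
      rfl


lemma Sset_top : Sset M M = Finset.univ := by
  ext w
  simp only [Finset.mem_univ, iff_true, mem_Sset]
  intro j hj
  exact absurd j.isLt (by omega)

lemma sum_apply_entry (n : ℕ) (f g : Fin M → Fin N) :
    (∑ w ∈ Sset M n, ((Equiv.Perm.sign w : ℤ) : ℂ) • P N M w) f g =
      ∑ w ∈ Sset M n, ((Equiv.Perm.sign w : ℤ) : ℂ) * (if g = f ∘ w then 1 else 0) := by
  rw [Matrix.sum_apply]
  exact Finset.sum_congr rfl fun w _ => rfl

/-- vanishing of the top antisymmetrizer when there are more factors than dimensions -/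
lemma Aop_vanish (s : Matrix (Fin N × Fin N) (Fin N × Fin N) ℂ)
    (hs : ∀ a b c d : Fin N, s (a, b) (c, d) =
      (if a = d then (1:ℂ) else 0) * (if b = c then 1 else 0))
    (hNM : N < M) : Aop N M s 0 M = 0 := by
  ext f g
  rw [Aop_sum N M s hs M le_rfl, Matrix.zero_apply, sum_apply_entry, Sset_top]
  obtain ⟨x, y, hxy, hfxy⟩ := Fintype.exists_ne_map_eq_of_card_lt f (by simpa using hNM)
  set τ := Equiv.swap x y with hτ
  have hfτ : f ∘ τ = f := by
    funext z
    simp only [Function.comp_apply]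
    rcases Equiv.swap_apply_def x y z with _
    by_cases hzx : z = x
    · rw [hzx, Equiv.swap_apply_left, ← hfxy]
    · by_cases hzy : z = y
      · rw [hzy, Equiv.swap_apply_right, hfxy]
      · rw [Equiv.swap_apply_of_ne_of_ne hzx hzy]
  apply Finset.sum_ninvolution (fun w => τ * w)
  · intro w
    have hc : (g = f ∘ ⇑(τ * w)) ↔ (g = f ∘ ⇑w) := by
      rw [Equiv.Perm.coe_mul, ← Function.comp_assoc, hfτ]
    have hsign : Equiv.Perm.sign (τ * w) = - Equiv.Perm.sign w := by
      rw [map_mul, Equiv.Perm.sign_swap hxy]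
      exact neg_one_mul _
    by_cases hg : g = f ∘ ⇑w
    · rw [if_pos hg, if_pos (hc.mpr hg), hsign]
      push_cast
      ring
    · rw [if_neg hg, if_neg (fun hcc => hg (hc.mp hcc))]
      ring
  · intro w hw hcon
    apply hw
    have : τ = 1 := by
      have := congrArg (· * w⁻¹) hcon
      simpa using this
    have hx : τ x = x := by rw [this]; rfl
    rw [hτ, Equiv.swap_apply_left] at hx
    exact absurd hx.symm hxy
  · intro w; exact Finset.mem_univ _
  · intro w
    rw [← mul_assoc, hτ, Equiv.swap_mul_self, one_mul]

/-- nonvanishing of the top antisymmetrizer when `M ≤ N`. -/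
lemma Aop_nonzero (s : Matrix (Fin N × Fin N) (Fin N × Fin N) ℂ)
    (hs : ∀ a b c d : Fin N, s (a, b) (c, d) =
      (if a = d then (1:ℂ) else 0) * (if b = c then 1 else 0))
    (hMN : M ≤ N) : Aop N M s 0 M ≠ 0 := by
  set f : Fin M → Fin N := fun j => ⟨(j : ℕ), by omega⟩ with hf
  have hfinj : Function.Injective f := by
    intro a b hab
    have := congrArg Fin.val hab
    exact Fin.ext this
  intro h0
  have hentry : Aop N M s 0 M f f = 0 := by rw [h0]; simp
  rw [Aop_sum N M s hs M le_rfl, sum_apply_entry, Sset_top] at hentry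
  rw [Finset.sum_eq_single 1] at hentry
  · revert hentry
    simp
  · intro w _ hw
    rw [if_neg, mul_zero]
    intro hc
    apply hw
    apply Equiv.ext
    intro j
    have hj : f j = f (w j) := congrFun hc j
    exact (hfinj hj).symm
  · intro hc; exact absurd (Finset.mem_univ _) hc


section Row

variable {N M : ℕ} (f₀ : Fin M → Fin N)

/-- `A` has row `f₀` equal to `c` times the corresponding identity row. -/
def RowC (A : Matrix (Fin M → Fin N) (Fin M → Fin N) ℂ) (c : ℂ) : Prop :=
  ∀ g, A f₀ g = c * (if f₀ = g then 1 else 0)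

lemma rowC_one : RowC f₀ (1 : Matrix (Fin M → Fin N) (Fin M → Fin N) ℂ) 1 := fun g => by
  rw [Matrix.one_apply, one_mul]

lemma rowC_mul {A B : Matrix (Fin M → Fin N) (Fin M → Fin N) ℂ} {c d : ℂ}
    (hA : RowC f₀ A c) (hB : RowC f₀ B d) : RowC f₀ (A * B) (c * d) := fun g => by
  rw [Matrix.mul_apply]
  have h1 : ∀ h : Fin M → Fin N, A f₀ h * B h g = if f₀ = h then c * B h g else 0 := by
    intro h
    rw [hA h]
    split_ifs <;> ring
  rw [Finset.sum_congr rfl fun h _ => h1 h, Finset.sum_ite_eq, if_pos (Finset.mem_univ _),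
    hB g]
  ring

lemma rowC_smul {A : Matrix (Fin M → Fin N) (Fin M → Fin N) ℂ} {c : ℂ} (e : ℂ)
    (hA : RowC f₀ A c) : RowC f₀ (e • A) (e * c) := fun g => by
  rw [Matrix.smul_apply, hA g, smul_eq_mul]
  ring

lemma rowC_add {A B : Matrix (Fin M → Fin N) (Fin M → Fin N) ℂ} {c d : ℂ}
    (hA : RowC f₀ A c) (hB : RowC f₀ B d) : RowC f₀ (A + B) (c + d) := fun g => by
  rw [Matrix.add_apply, hA g, hB g]
  ring

lemma rowC_sum {ι : Type*} (t : Finset ι) (A : ι → Matrix (Fin M → Fin N) (Fin M → Fin N) ℂ)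
    (c : ι → ℂ) (h : ∀ i ∈ t, RowC f₀ (A i) (c i)) :
    RowC f₀ (∑ i ∈ t, A i) (∑ i ∈ t, c i) := fun g => by
  rw [Matrix.sum_apply, Finset.sum_congr rfl fun i hi => h i hi g, ← Finset.sum_mul]

lemma rowC_list_prod (A : ℕ → Matrix (Fin M → Fin N) (Fin M → Fin N) ℂ) :
    ∀ L : List ℕ, (∀ i ∈ L, RowC f₀ (A i) (-1)) →
      RowC f₀ ((L.map A).prod) ((-1) ^ L.length) := by
  intro L
  induction L with
  | nil => intro _; simpa using rowC_one f₀
  | cons a L ih =>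
    intro hL
    rw [List.map_cons, List.prod_cons, List.length_cons, pow_succ, mul_comm]
    exact rowC_mul f₀ (hL a List.mem_cons_self) (ih fun i hi => hL i (List.mem_cons_of_mem a hi))

end Row

section Odd

variable {N M : ℕ} (s : Matrix (Fin N × Fin N) (Fin N × Fin N) ℂ) (γ : Fin N)
  (hsγ : ∀ c d : Fin N, s (γ, γ) (c, d) =
    -((if γ = d then (1:ℂ) else 0) * (if γ = c then 1 else 0)))

include hsγ

lemma rowC_opAt (i : ℕ) (h : i + 1 < M) :
    RowC (fun _ : Fin M => γ) (opAt N M s i) (-1) := by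
  intro g
  rw [opAt_apply N M s i h, hsγ]
  by_cases hg : (fun _ : Fin M => γ) = g
  · rw [if_pos hg]
    subst hg
    simp
  · rw [if_neg hg]
    have hne : ¬ ∀ j : Fin M, γ = g j := by
      intro hc
      exact hg (funext fun j => hc j)
    obtain ⟨j, hj⟩ := not_forall.mp hne
    by_cases hji : (j : ℕ) = i
    · have hj' : ¬ γ = g ⟨i, by omega⟩ := by
        rw [show (⟨i, by omega⟩ : Fin M) = j from Fin.ext (by simp [hji])]
        exact hj
      rw [if_neg hj']
      ring
    · by_cases hji2 : (j : ℕ) = i + 1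
      · have hj' : ¬ γ = g ⟨i + 1, h⟩ := by
          rw [show (⟨i + 1, h⟩ : Fin M) = j from Fin.ext (by simp [hji2])]
          exact hj
        rw [if_neg hj']
        ring
      · rw [if_neg (fun hc : (∀ j' : Fin M, (j' : ℕ) ≠ i → (j' : ℕ) ≠ i + 1 →
            (fun _ : Fin M => γ) j' = g j') => hj (hc j hji hji2))]
        ring

lemma rowC_Aop : ∀ n, n ≤ M →
    RowC (fun _ : Fin M => γ) (Aop N M s 0 n) ((n.factorial : ℂ)) := by
  intro n
  induction n using Nat.strong_induction_on with
  | _ n ih =>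
  rcases n with _ | _ | n
  · intro _
    simpa [Aop] using rowC_one (fun _ : Fin M => γ)
  · intro _
    simpa [Aop] using rowC_one (fun _ : Fin M => γ)
  · intro h
    have e1 : Aop N M s 0 (n + 2) =
        (1 + ∑ k ∈ Finset.Icc 1 (n + 1),
          ((-1 : ℂ) ^ (n + 2 - k)) • sigmaFwd N M s 0 k (n + 2)) * Aop N M s 0 (n + 1) := rfl
    rw [e1]
    have hrow : RowC (fun _ : Fin M => γ)
        (1 + ∑ k ∈ Finset.Icc 1 (n + 1),
          ((-1 : ℂ) ^ (n + 2 - k)) • sigmaFwd N M s 0 k (n + 2)) ((n + 2 : ℕ) : ℂ) := by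
      have hσk : ∀ k ∈ Finset.Icc 1 (n + 1),
          RowC (fun _ : Fin M => γ)
            (((-1 : ℂ) ^ (n + 2 - k)) • sigmaFwd N M s 0 k (n + 2)) 1 := by
        intro k hk
        rw [Finset.mem_Icc] at hk
        have hfwd : RowC (fun _ : Fin M => γ) (sigmaFwd N M s 0 k (n + 2))
            ((-1) ^ (n + 2 - k)) := by
          unfold sigmaFwd
          have hmm : (List.range (n + 2 - k)).map (fun t => opAt N M s (0 + k - 1 + t)) =
              (((List.range (n + 2 - k)).map (fun t => 0 + k - 1 + t)).map (opAt N M s)) := by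
            rw [List.map_map]
            rfl
          rw [hmm]
          have hlen : (((List.range (n + 2 - k)).map (fun t => 0 + k - 1 + t))).length
              = n + 2 - k := by
            rw [List.length_map, List.length_range]
          have hmem : ∀ i ∈ (List.range (n + 2 - k)).map (fun t => 0 + k - 1 + t),
              RowC (fun _ : Fin M => γ) (opAt N M s i) (-1) := by
            intro i hi
            obtain ⟨t, ht, rfl⟩ := List.mem_map.mp hi
            rw [List.mem_range] at ht
            exact rowC_opAt s γ hsγ _ (by omega)
          have hlp := rowC_list_prod (fun _ : Fin M => γ) (opAt N M s) _ hmem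
          rwa [hlen] at hlp
        have := rowC_smul (fun _ : Fin M => γ) ((-1 : ℂ) ^ (n + 2 - k)) hfwd
        have hcoef : ((-1 : ℂ) ^ (n + 2 - k)) * ((-1) ^ (n + 2 - k)) = 1 := by
          rw [← mul_pow]
          norm_num
        rwa [hcoef] at this
      have hsum := rowC_sum (fun _ : Fin M => γ) (Finset.Icc 1 (n + 1))
        (fun k => ((-1 : ℂ) ^ (n + 2 - k)) • sigmaFwd N M s 0 k (n + 2))
        (fun _ => (1 : ℂ)) hσk
      have hone := rowC_one (M := M) (N := N) (fun _ : Fin M => γ)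
      have := rowC_add (fun _ : Fin M => γ) hone hsum
      have hc2 : (1 : ℂ) + ∑ _k ∈ Finset.Icc 1 (n + 1), (1 : ℂ) = ((n + 2 : ℕ) : ℂ) := by
        rw [Finset.sum_const, Nat.card_Icc]
        push_cast
        ring
      rwa [hc2] at this
    have hA := ih (n + 1) (by omega) (by omega)
    have := rowC_mul (fun _ : Fin M => γ) hrow hA
    have hc3 : ((n + 2 : ℕ) : ℂ) * ((n + 1).factorial : ℂ) = ((n + 2).factorial : ℂ) := by
      rw [Nat.factorial_succ (n + 1)]
      push_cast
      ring
    rwa [hc3] at this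

lemma Aop_ne_zero_of_odd (n : ℕ) : Aop N n s 0 n ≠ 0 := by
  intro h0
  have hrow := rowC_Aop s γ hsγ (M := n) n le_rfl (fun _ => γ)
  rw [h0] at hrow
  simp [Nat.factorial_ne_zero] at hrow
  exact Nat.factorial_ne_zero n (by exact_mod_cast hrow.symm)

end Odd

end SupPerm

/-- For the super-permutation braiding on a Z₂-graded space `V` with `p`
even and `m` odd basis vectors, the height of `σ` (the largest `n` with `A_{1→n} ≠ 0`) is
infinite if `m ≥ 1` (all the antisymmetrizers are nonzero), and equals `p` if `m = 0`. -/
theorem superperm_height (p m : ℕ)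
    (σ : Matrix (Fin (p + m) × Fin (p + m)) (Fin (p + m) × Fin (p + m)) ℂ)
    (par : Fin (p + m) → ℕ)
    (hpar : ∀ i, par i = if (i : ℕ) < p then 0 else 1)
    (hσ : ∀ a b c d, σ (a, b) (c, d) =
      (-1 : ℂ) ^ (par a * par b) * (if a = d then 1 else 0) * (if b = c then 1 else 0)) :
    (1 ≤ m → ∀ n, Aop (p + m) n σ 0 n ≠ 0) ∧
      (m = 0 → (1 ≤ p → Aop (p + m) p σ 0 p ≠ 0) ∧
        ∀ n, p < n → Aop (p + m) n σ 0 n = 0) := by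
  constructor
  · intro hm n
    have hγ : p < p + m := by omega
    set γ : Fin (p + m) := ⟨p, hγ⟩ with hγdef
    have hsγ : ∀ c d : Fin (p + m), σ (γ, γ) (c, d) =
        -((if γ = d then (1:ℂ) else 0) * (if γ = c then 1 else 0)) := by
      intro c d
      rw [hσ]
      have hparγ : par γ = 1 := by rw [hpar]; simp [hγdef]
      rw [hparγ]
      simp only [mul_one, pow_one]
      ring
    exact SupPerm.Aop_ne_zero_of_odd σ γ hsγ n
  · intro hm
    subst hm
    have hs : ∀ a b c d : Fin (p + 0), σ (a, b) (c, d) =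
        (if a = d then (1:ℂ) else 0) * (if b = c then 1 else 0) := by
      intro a b c d
      rw [hσ, hpar]
      have ha := a.isLt
      rw [if_pos (by omega : (a : ℕ) < p)]
      simp only [Nat.zero_mul, pow_zero, one_mul]
    refine ⟨fun hp => ?_, fun n hn => ?_⟩
    · exact SupPerm.Aop_nonzero (p + 0) p σ hs (by omega)
    · exact SupPerm.Aop_vanish (p + 0) n σ hs (by omega)
end
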